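/- arXiv:1102.4023 — 3 statements merged into one kernel-verified Lean document; each statement's English description precedes it below -/
import Mathlib

section
/- Let Θ : A* → A* be an involutive antimorphism and let u ∈ A^ℕ be a recurrent infinite word with finite Θ-palindromic defect. Then there exists a positive integer H such that for every factor w of u with |w| > H, the occurrences of w and of Θ(w) in u alternate; that is, listing in increasing order all indices that are occurrences of w or of Θ(w), consecutive indices in this list are alternately occurrences of w and occurrences of Θ(w). -/
/-!
Basic notions from combinatorics on words: involutive antimorphisms,
Θ-palindromes, factors of infinite words, palindromic defect, richness.
-/

/-- `Θ` is an involutive antimorphism of the free monoid `A*` (words as lists). -/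
def IsAntimorphism {A : Type*} (Θ : List A → List A) : Prop :=
  (∀ x y : List A, Θ (x ++ y) = Θ y ++ Θ x) ∧ ∀ x : List A, Θ (Θ x) = x

/-- The factor `u_i u_{i+1} … u_{i+n-1}` of the infinite word `u`. -/
def factorAt {A : Type*} (u : ℕ → A) (i n : ℕ) : List A :=
  (List.range n).map fun k => u (i + k)

/-- `i` is an occurrence of `w` in the infinite word `u`. -/
def OccursAt {A : Type*} (u : ℕ → A) (w : List A) (i : ℕ) : Prop :=
  w = factorAt u i w.length

/-- `w` is a factor of the infinite word `u`. -/
def IsFactorOf {A : Type*} (w : List A) (u : ℕ → A) : Prop :=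
  ∃ i, OccursAt u w i

/-- The prefix of length `n` of the infinite word `u`. -/
def prefixWord {A : Type*} (u : ℕ → A) (n : ℕ) : List A :=
  factorAt u 0 n

/-- `u` is recurrent: every factor has infinitely many occurrences. -/
def Recurrent {A : Type*} (u : ℕ → A) : Prop :=
  ∀ w, IsFactorOf w u → ∀ N, ∃ i, N ≤ i ∧ OccursAt u w i

/-- `u` is uniformly recurrent: every factor occurs with bounded gaps
(equivalently, every factor has finitely many return words). -/
def UniformlyRecurrent {A : Type*} (u : ℕ → A) : Prop :=
  ∀ w, IsFactorOf w u → ∃ R, ∀ N, ∃ i, N ≤ i ∧ i < N + R ∧ OccursAt u w i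

/-- `i` is an occurrence of the word `s` in the finite word `r`. -/
def OccursIn {A : Type*} (s r : List A) (i : ℕ) : Prop :=
  i + s.length ≤ r.length ∧ s = (r.drop i).take s.length

/-- `s` occurs exactly once in `r`. -/
def Unioccurrent {A : Type*} (s r : List A) : Prop :=
  Set.ncard {i | OccursIn s r i} = 1

/-- The set `Pal_Θ(w)` of `Θ`-palindromic factors of the finite word `w`
(the empty word included). -/
def palSet {A : Type*} (Θ : List A → List A) (w : List A) : Set (List A) :=
  {p | p <:+: w ∧ Θ p = p}

/-- `γ_Θ(w)`: the number of pairs `{a, Θ(a)}` where `a` is a letter occurring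
in `w` with `a ≠ Θ(a)`. -/
noncomputable def gammaTheta {A : Type*} (Θ : List A → List A) (w : List A) : ℕ :=
  Set.ncard {P : Set A | ∃ a, a ∈ w ∧ Θ [a] ≠ [a] ∧ P = {b | [b] = [a] ∨ [b] = Θ [a]}}

/-- The `Θ`-palindromic defect `D_Θ(w) = |w| + 1 - γ_Θ(w) - #Pal_Θ(w)` of a finite word. -/
noncomputable def defect {A : Type*} (Θ : List A → List A) (w : List A) : ℤ :=
  (w.length : ℤ) + 1 - gammaTheta Θ w - (palSet Θ w).ncard

/-- The infinite word `u` has finite `Θ`-palindromic defect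
(`D_Θ(u) = sup { D_Θ(w) : w factor of u } < ∞`), i.e. `u` is almost `Θ`-rich. -/
def FiniteDefect {A : Type*} (Θ : List A → List A) (u : ℕ → A) : Prop :=
  ∃ C : ℤ, ∀ w, IsFactorOf w u → defect Θ w ≤ C

/-- The infinite word `u` is `Θ`-rich: every factor `w` satisfies
`#Pal_Θ(w) = |w| + 1 - γ_Θ(w)`, i.e. has zero `Θ`-defect. -/
def RichWord {A : Type*} (Θ : List A → List A) (u : ℕ → A) : Prop :=
  ∀ w, IsFactorOf w u → defect Θ w = 0

/-- The language of `u` is closed under `Θ`. -/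
def LangClosedUnder {A : Type*} (Θ : List A → List A) (u : ℕ → A) : Prop :=
  ∀ w, IsFactorOf w u → IsFactorOf (Θ w) u

/-- `u` is the image of the infinite word `v` under the monoid morphism
`B* → A*` determined by `φ` on letters, i.e. `u = φ(v₀)φ(v₁)φ(v₂)…`. -/
def IsMorphicImage {A B : Type*} (u : ℕ → A) (φ : B → List A) (v : ℕ → B) : Prop :=
  (∀ n, OccursAt u ((prefixWord v n).flatMap φ) 0) ∧
    ∀ N, ∃ n, N ≤ ((prefixWord v n).flatMap φ).length

/-- The occurrences of `w` and `w'` in `u` alternate: listing in increasing order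
all occurrences of `w` or `w'`, consecutive indices are alternately occurrences
of `w` and of `w'` (between two occurrences of one of them, the second of which is
not an occurrence of the other, there is an occurrence of the other). -/
def AlternateIn {A : Type*} (u : ℕ → A) (w w' : List A) : Prop :=
  (∀ i j, i < j → OccursAt u w i → OccursAt u w j → ¬ OccursAt u w' j →
    ∃ k, i < k ∧ k < j ∧ OccursAt u w' k) ∧
  (∀ i j, i < j → OccursAt u w' i → OccursAt u w' j → ¬ OccursAt u w j →
    ∃ k, i < k ∧ k < j ∧ OccursAt u w k)

/-- Factor complexity `C(n)` of the infinite word `u`. -/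
noncomputable def complexity {A : Type*} (u : ℕ → A) (n : ℕ) : ℕ :=
  Set.ncard {w : List A | IsFactorOf w u ∧ w.length = n}

/-- `Θ`-palindromic complexity `P_Θ(n)` of the infinite word `u`. -/
noncomputable def palComplexity {A : Type*} (Θ : List A → List A) (u : ℕ → A) (n : ℕ) : ℕ :=
  Set.ncard {w : List A | IsFactorOf w u ∧ w.length = n ∧ Θ w = w}

/-- `r` is a complete return word of `w` in `u`: a factor of `u` with exactly two
occurrences of `w`, one as a prefix and one as a suffix. -/
def IsCompleteReturnWord {A : Type*} (u : ℕ → A) (w r : List A) : Prop :=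
  IsFactorOf r u ∧ w <+: r ∧ w <:+ r ∧ Set.ncard {i | OccursIn w r i} = 2


/-! ### Auxiliary development -/

section Aux

variable {A : Type*}

lemma aux_theta_nil (Θ : List A → List A) (hΘ : IsAntimorphism Θ) : Θ [] = ([] : List A) := by
  have h := hΘ.1 [] []
  simp only [List.append_nil] at h
  have hl := congrArg List.length h
  simp only [List.length_append] at hl
  exact List.eq_nil_of_length_eq_zero (by omega)

lemma aux_theta_len (Θ : List A → List A) (hΘ : IsAntimorphism Θ) (x : List A) :
    (Θ x).length = x.length := by
  have h1 : ∀ y : List A, y ≠ [] → Θ y ≠ [] := by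
    intro y hy h
    exact hy (by rw [← hΘ.2 y, h, aux_theta_nil Θ hΘ])
  have hs : ∀ a : A, (Θ [a]).length = 1 := by
    intro a
    rcases e : Θ [a] with _ | ⟨b, y⟩
    · exact absurd e (h1 [a] (by simp))
    · have hinv : Θ (Θ [a]) = [a] := hΘ.2 _
      rw [e] at hinv
      have hb : (b :: y) = [b] ++ y := rfl
      rw [hb, hΘ.1] at hinv
      have lb : Θ [b] ≠ [] := h1 [b] (by simp)
      have hl := congrArg List.length hinv
      simp only [List.length_append, List.length_cons, List.length_nil] at hl
      have hbpos : 0 < (Θ [b]).length := List.length_pos_iff.mpr lb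
      have hy0 : (Θ y).length = 0 := by omega
      have hy : Θ y = [] := List.eq_nil_of_length_eq_zero hy0
      have hynil : y = [] := by rw [← hΘ.2 y, hy, aux_theta_nil Θ hΘ]
      simp [e, hynil]
  induction x with
  | nil => simp [aux_theta_nil Θ hΘ]
  | cons a x ih =>
    have : (a :: x) = [a] ++ x := rfl
    rw [this, hΘ.1]
    simp only [List.length_append, List.length_cons, List.length_nil, ih, hs a]
    omega

lemma aux_occursIn_iff {s r : List A} {i : ℕ} :
    OccursIn s r i ↔ ∃ a b, r = a ++ s ++ b ∧ a.length = i := by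
  constructor
  · rintro ⟨h1, h2⟩
    have h3 : r.drop i = s ++ r.drop (i + s.length) := by
      conv_lhs => rw [← List.take_append_drop s.length (r.drop i)]
      rw [List.drop_drop, ← h2]
    refine ⟨r.take i, r.drop (i + s.length), ?_, by simp [List.length_take]; omega⟩
    conv_lhs => rw [← List.take_append_drop i r, h3]
    rw [List.append_assoc]
  · rintro ⟨a, b, rfl, rfl⟩
    constructor
    · simp [List.length_append]
    · rw [List.append_assoc, List.drop_left, List.take_left]

lemma aux_occ_prefix {s r : List A} (h : s <+: r) : OccursIn s r 0 := by
  obtain ⟨t, rfl⟩ := h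
  exact aux_occursIn_iff.mpr ⟨[], t, by simp, rfl⟩

lemma aux_occ_suffix {s r : List A} (h : s <:+ r) : OccursIn s r (r.length - s.length) := by
  obtain ⟨t, rfl⟩ := h
  exact aux_occursIn_iff.mpr ⟨t, [], by simp, by simp [List.length_append]⟩

lemma aux_occ_trans {v r w : List A} {m t : ℕ}
    (h1 : OccursIn v r m) (h2 : OccursIn w v t) : OccursIn w r (m + t) := by
  obtain ⟨a, b, rfl, rfl⟩ := aux_occursIn_iff.mp h1
  obtain ⟨c, d, rfl, rfl⟩ := aux_occursIn_iff.mp h2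
  exact aux_occursIn_iff.mpr ⟨a ++ c, d ++ b, by simp [List.append_assoc], by simp⟩

lemma aux_occ_mirror {Θ : List A → List A} (hΘ : IsAntimorphism Θ) {s r : List A} {i : ℕ}
    (h : OccursIn s r i) : OccursIn (Θ s) (Θ r) (r.length - i - s.length) := by
  obtain ⟨a, b, rfl, rfl⟩ := aux_occursIn_iff.mp h
  refine aux_occursIn_iff.mpr ⟨Θ b, Θ a, ?_, ?_⟩
  · rw [hΘ.1 (a ++ s) b, hΘ.1 a s, List.append_assoc]
  · rw [aux_theta_len Θ hΘ]
    simp [List.length_append]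

lemma aux_occ_to_suffix {s r : List A} {i : ℕ} (h : OccursIn s r i)
    (he : i + s.length = r.length) : s <:+ r := by
  obtain ⟨a, b, rfl, rfl⟩ := aux_occursIn_iff.mp h
  have hb : b = [] := by
    rw [List.length_append, List.length_append] at he
    exact List.eq_nil_of_length_eq_zero (by omega)
  exact ⟨a, by rw [hb, List.append_nil]⟩

lemma aux_occ_to_prefix {s r : List A} (h : OccursIn s r 0) : s <+: r := by
  obtain ⟨a, b, he, ha⟩ := aux_occursIn_iff.mp h
  have : a = [] := List.eq_nil_of_length_eq_zero ha
  rw [this] at he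
  exact ⟨b, by rw [he]; simp⟩

lemma aux_suffix_drop {s p : List A} (h : s <:+ p) : p.drop (p.length - s.length) = s := by
  obtain ⟨t, rfl⟩ := h
  have : (t ++ s).length - s.length = t.length := by simp [List.length_append]
  rw [this, List.drop_left]

lemma aux_suffix_eq {s1 s2 p : List A} (h1 : s1 <:+ p) (h2 : s2 <:+ p)
    (h : s1.length = s2.length) : s1 = s2 := by
  rw [← aux_suffix_drop h1, ← aux_suffix_drop h2, h]

lemma aux_suffix_suffix {s1 s2 p : List A} (h1 : s1 <:+ p) (h2 : s2 <:+ p)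
    (h : s1.length ≤ s2.length) : s1 <:+ s2 := by
  have e1 := aux_suffix_drop h1
  have e2 := aux_suffix_drop h2
  have h1l : s1.length ≤ p.length := h1.length_le
  have h2l : s2.length ≤ p.length := h2.length_le
  have key : p.drop (p.length - s1.length) = (p.drop (p.length - s2.length)).drop (s2.length - s1.length) := by
    rw [List.drop_drop]
    congr 1
    omega
  have : s1 <:+ p.drop (p.length - s2.length) := by
    rw [← e1, key]
    exact List.drop_suffix _ _
  rwa [e2] at this

lemma aux_prefix_take {s p : List A} (h : s <+: p) : p.take s.length = s := by
  obtain ⟨t, rfl⟩ := h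
  exact List.take_left

lemma aux_pal_prefix {Θ : List A → List A} (hΘ : IsAntimorphism Θ) {s r : List A}
    (h : s <:+ r) (hr : Θ r = r) : Θ s <+: r := by
  obtain ⟨t, rfl⟩ := h
  exact ⟨Θ t, (hΘ.1 t s).symm.trans hr⟩

end Aux

section Aux2

variable {A : Type*}

lemma aux_factorAt_length (u : ℕ → A) (i n : ℕ) : (factorAt u i n).length = n := by
  simp [factorAt]

lemma aux_factorAt_add (u : ℕ → A) (i a b : ℕ) :
    factorAt u i (a + b) = factorAt u i a ++ factorAt u (i + a) b := by
  simp only [factorAt, List.range_add, List.map_append, List.map_map]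
  congr 1
  apply List.map_congr_left
  intro k _
  simp only [Function.comp_apply]
  congr 1
  omega

lemma aux_factorAt_split3 (u : ℕ → A) (m t k r : ℕ) :
    factorAt u m (t + k + r) =
      factorAt u m t ++ factorAt u (m + t) k ++ factorAt u (m + t + k) r := by
  rw [aux_factorAt_add u m (t + k) r, aux_factorAt_add u m t k, ← Nat.add_assoc]

lemma aux_pre_len (u : ℕ → A) (n : ℕ) : (prefixWord u n).length = n :=
  aux_factorAt_length u 0 n

lemma aux_pre_succ (u : ℕ → A) (n : ℕ) :
    prefixWord u (n + 1) = prefixWord u n ++ [u n] := by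
  show factorAt u 0 (n + 1) = factorAt u 0 n ++ [u n]
  rw [aux_factorAt_add u 0 n 1]
  congr 1
  simp [factorAt, List.range_succ]

lemma aux_pre_prefix (u : ℕ → A) {m n : ℕ} (h : m ≤ n) :
    prefixWord u m <+: prefixWord u n := by
  refine ⟨factorAt u m (n - m), ?_⟩
  show factorAt u 0 m ++ factorAt u m (n - m) = factorAt u 0 n
  have h2 := aux_factorAt_add u 0 m (n - m)
  simp only [Nat.zero_add] at h2
  rw [← h2]
  congr 1
  omega

lemma aux_occursAt_iff (u : ℕ → A) (w : List A) (i n : ℕ) (h : i + w.length ≤ n) :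
    OccursAt u w i ↔ OccursIn w (prefixWord u n) i := by
  have hn : n = i + w.length + (n - i - w.length) := by omega
  have hdec : prefixWord u n = factorAt u 0 i ++ factorAt u i w.length ++
      factorAt u (i + w.length) (n - i - w.length) := by
    have h2 := aux_factorAt_split3 u 0 i w.length (n - i - w.length)
    simp only [Nat.zero_add] at h2
    show factorAt u 0 n = _
    conv_lhs => rw [hn]
    exact h2
  constructor
  · intro ho
    apply aux_occursIn_iff.mpr
    refine ⟨factorAt u 0 i, factorAt u (i + w.length) (n - i - w.length), ?_,
      aux_factorAt_length u 0 i⟩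
    rw [hdec, ← ho]
  · intro ho
    obtain ⟨a, b, he, hl⟩ := aux_occursIn_iff.mp ho
    rw [hdec] at he
    rw [List.append_assoc, List.append_assoc] at he
    obtain ⟨h1, h2⟩ := List.append_inj he (by rw [aux_factorAt_length]; omega)
    obtain ⟨h3, _⟩ := List.append_inj h2 (by rw [aux_factorAt_length])
    exact h3.symm

lemma aux_occursAt_of_occursIn {u : ℕ → A} {v w : List A} {m t : ℕ}
    (hv : OccursAt u v m) (hw : OccursIn w v t) : OccursAt u w (m + t) := by
  obtain ⟨a, b, he, hl⟩ := aux_occursIn_iff.mp hw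
  have hb : v.length = t + w.length + (v.length - t - w.length) := by
    have := congrArg List.length he
    simp [List.length_append] at this
    omega
  have hv2 : v = factorAt u m t ++ factorAt u (m + t) w.length ++
      factorAt u (m + t + w.length) (v.length - t - w.length) := by
    rw [← aux_factorAt_split3, ← hb]
    exact hv
  have q := hv2.symm.trans he
  rw [List.append_assoc, List.append_assoc] at q
  obtain ⟨q1, q2⟩ := List.append_inj q (by rw [aux_factorAt_length]; omega)
  obtain ⟨q3, _⟩ := List.append_inj q2 (by rw [aux_factorAt_length])
  exact q3.symm

lemma aux_occursIn_of_occursAt {u : ℕ → A} {v w : List A} {m t : ℕ}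
    (hv : OccursAt u v m) (hw : OccursAt u w (m + t)) (h : t + w.length ≤ v.length) :
    OccursIn w v t := by
  have hb : v.length = t + w.length + (v.length - t - w.length) := by omega
  have hv2 : v = factorAt u m t ++ factorAt u (m + t) w.length ++
      factorAt u (m + t + w.length) (v.length - t - w.length) := by
    rw [← aux_factorAt_split3, ← hb]
    exact hv
  refine aux_occursIn_iff.mpr ⟨factorAt u m t,
    factorAt u (m + t + w.length) (v.length - t - w.length), ?_, aux_factorAt_length u m t⟩
  conv_lhs => rw [hv2]
  rw [← hw]

end Aux2

section Aux3

variable {A : Type*}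

/-- Length of the longest `Θ`-palindromic suffix. -/
noncomputable def plen (Θ : List A → List A) (p : List A) : ℕ :=
  @Nat.findGreatest (fun ℓ => Θ (p.drop (p.length - ℓ)) = p.drop (p.length - ℓ))
    (Classical.decPred _) p.length

/-- The longest `Θ`-palindromic suffix. -/
noncomputable def psuf (Θ : List A → List A) (p : List A) : List A :=
  p.drop (p.length - plen Θ p)

lemma aux_plen_le (Θ : List A → List A) (p : List A) : plen Θ p ≤ p.length := by
  letI : DecidablePred (fun ℓ => Θ (p.drop (p.length - ℓ)) = p.drop (p.length - ℓ)) :=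
    Classical.decPred _
  exact Nat.findGreatest_le p.length

lemma aux_psuf_suffix (Θ : List A → List A) (p : List A) : psuf Θ p <:+ p :=
  List.drop_suffix _ _

lemma aux_psuf_length (Θ : List A → List A) (p : List A) : (psuf Θ p).length = plen Θ p := by
  have := aux_plen_le Θ p
  simp [psuf, List.length_drop]
  omega

lemma aux_psuf_pal {Θ : List A → List A} (hΘ : IsAntimorphism Θ) (p : List A) :
    Θ (psuf Θ p) = psuf Θ p := by
  letI : DecidablePred (fun ℓ => Θ (p.drop (p.length - ℓ)) = p.drop (p.length - ℓ)) :=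
    Classical.decPred _
  have h0 : (fun ℓ => Θ (p.drop (p.length - ℓ)) = p.drop (p.length - ℓ)) 0 := by
    simp [aux_theta_nil Θ hΘ]
  show Θ (p.drop (p.length - plen Θ p)) = p.drop (p.length - plen Θ p)
  exact Nat.findGreatest_spec (P := fun ℓ => Θ (p.drop (p.length - ℓ)) = p.drop (p.length - ℓ))
    (Nat.zero_le p.length) h0

lemma aux_psuf_longest {Θ : List A → List A} {q p : List A}
    (hq : q <:+ p) (hpal : Θ q = q) : q.length ≤ plen Θ p := by
  letI : DecidablePred (fun ℓ => Θ (p.drop (p.length - ℓ)) = p.drop (p.length - ℓ)) :=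
    Classical.decPred _
  refine Nat.le_findGreatest hq.length_le ?_
  show Θ (p.drop (p.length - q.length)) = p.drop (p.length - q.length)
  rw [aux_suffix_drop hq]
  exact hpal

lemma aux_infix_concat {z p : List A} {a : A} (h : z <:+: p ++ [a]) :
    z <:+: p ∨ z <:+ p ++ [a] := by
  obtain ⟨s, t, he⟩ := h
  rcases List.eq_nil_or_concat t with rfl | ⟨t', c, rfl⟩
  · right
    exact ⟨s, by simpa using he⟩
  · left
    have h2 : (s ++ z ++ t') ++ [c] = p ++ [a] := by
      rw [← he, List.concat_eq_append]
      simp [List.append_assoc]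
    have hlen : (s ++ z ++ t').length = p.length := by
      have := congrArg List.length h2
      simp [List.length_append] at this ⊢
      omega
    obtain ⟨h1, _⟩ := List.append_inj h2 hlen
    exact ⟨s, t', h1⟩

lemma aux_palSet_finite (Θ : List A → List A) (p : List A) : (palSet Θ p).Finite := by
  have hfin : {x : List A | x <:+: p}.Finite := by
    apply Set.Finite.subset (List.finite_toSet (p.tails.flatMap List.inits))
    intro x hx
    rcases List.infix_iff_prefix_suffix.mp hx with ⟨t, h1, h2⟩
    exact List.mem_flatMap.mpr ⟨t, (List.mem_tails _ _).mpr h2, (List.mem_inits _ _).mpr h1⟩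
  exact Set.Finite.subset hfin (fun z hz => hz.1)

lemma aux_palSet_mono {Θ : List A → List A} {p q : List A} (h : p <+: q) :
    palSet Θ p ⊆ palSet Θ q :=
  fun z hz => ⟨hz.1.trans h.isInfix, hz.2⟩

lemma aux_step {Θ : List A → List A} (hΘ : IsAntimorphism Θ) (p : List A) (a : A) :
    (palSet Θ (p ++ [a])).ncard ≤ (palSet Θ p).ncard + 1 := by
  have hsub : palSet Θ (p ++ [a]) ⊆ palSet Θ p ∪ {psuf Θ (p ++ [a])} := by
    intro z hz
    by_cases hzp : z <:+: p
    · exact Or.inl ⟨hzp, hz.2⟩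
    · right
      have hzs : z <:+ p ++ [a] := (aux_infix_concat hz.1).resolve_left hzp
      have hle : z.length ≤ plen Θ (p ++ [a]) := aux_psuf_longest hzs hz.2
      rcases eq_or_lt_of_le hle with he | hlt
      · have : z = psuf Θ (p ++ [a]) :=
          aux_suffix_eq hzs (aux_psuf_suffix Θ _) (by rw [aux_psuf_length]; exact he)
        simp [this]
      · exfalso
        apply hzp
        have hzs2 : z <:+ psuf Θ (p ++ [a]) :=
          aux_suffix_suffix hzs (aux_psuf_suffix Θ _) (by rw [aux_psuf_length]; omega)
        have hpz : z <+: psuf Θ (p ++ [a]) := by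
          have := aux_pal_prefix hΘ hzs2 (aux_psuf_pal hΘ _)
          rwa [hz.2] at this
        obtain ⟨t1, ht1⟩ := hpz
        obtain ⟨t2, ht2⟩ := aux_psuf_suffix Θ (p ++ [a])
        have ht1ne : t1 ≠ [] := by
          intro hnil
          rw [hnil, List.append_nil] at ht1
          have := congrArg List.length ht1
          rw [aux_psuf_length] at this
          omega
        obtain ⟨t1', c, rfl⟩ := (List.eq_nil_or_concat t1).resolve_left ht1ne
        have hbig : (t2 ++ (z ++ t1')) ++ [c] = p ++ [a] := by
          rw [← ht2, ← ht1, List.concat_eq_append]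
          simp [List.append_assoc]
        have hlen2 : (t2 ++ (z ++ t1')).length = p.length := by
          have := congrArg List.length hbig
          simp [List.length_append] at this ⊢
          omega
        obtain ⟨h1, _⟩ := List.append_inj hbig hlen2
        exact ⟨t2, t1', by rw [← h1]; simp [List.append_assoc]⟩
  calc (palSet Θ (p ++ [a])).ncard
      ≤ (palSet Θ p ∪ {psuf Θ (p ++ [a])}).ncard :=
        Set.ncard_le_ncard hsub ((aux_palSet_finite Θ p).union (Set.finite_singleton _))
    _ ≤ (palSet Θ p).ncard + ({psuf Θ (p ++ [a])} : Set (List A)).ncard :=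
        Set.ncard_union_le _ _
    _ = (palSet Θ p).ncard + 1 := by rw [Set.ncard_singleton]

lemma aux_uniocc {Θ : List A → List A} (hΘ : IsAntimorphism Θ) (p : List A) (a : A)
    (hne : (palSet Θ (p ++ [a])).ncard ≠ (palSet Θ p).ncard) :
    ∀ i, OccursIn (psuf Θ (p ++ [a])) (p ++ [a]) i → i + plen Θ (p ++ [a]) = p.length + 1 := by
  have hsub : palSet Θ p ⊆ palSet Θ (p ++ [a]) := aux_palSet_mono ⟨[a], rfl⟩
  have hex : ∃ z ∈ palSet Θ (p ++ [a]), z ∉ palSet Θ p := by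
    by_contra hcon
    push_neg at hcon
    exact hne (by rw [Set.Subset.antisymm hcon hsub])
  obtain ⟨z, hz, hznot⟩ := hex
  have hznotinf : ¬ z <:+: p := fun h => hznot ⟨h, hz.2⟩
  have hzs : z <:+ p ++ [a] := (aux_infix_concat hz.1).resolve_left hznotinf
  have hzsuf : z <:+ psuf Θ (p ++ [a]) :=
    aux_suffix_suffix hzs (aux_psuf_suffix Θ _)
      (by rw [aux_psuf_length]; exact aux_psuf_longest hzs hz.2)
  have hpsnot : ¬ (psuf Θ (p ++ [a])) <:+: p :=
    fun h => hznotinf (hzsuf.isInfix.trans h)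
  intro i hi
  obtain ⟨b, c, he, hb⟩ := aux_occursIn_iff.mp hi
  rcases List.eq_nil_or_concat c with rfl | ⟨c', d, rfl⟩
  · have hlen3 := congrArg List.length he
    simp only [List.length_append, List.append_nil, List.length_cons, List.length_nil,
      aux_psuf_length] at hlen3
    omega
  · exfalso
    apply hpsnot
    have hbig : (b ++ (psuf Θ (p ++ [a]) ++ c')) ++ [d] = p ++ [a] := by
      conv_rhs => rw [he]
      simp [List.concat_eq_append, List.append_assoc]
    have hlen2 : (b ++ (psuf Θ (p ++ [a]) ++ c')).length = p.length := by
      have h4 := congrArg List.length hbig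
      simp [List.length_append] at h4 ⊢
      omega
    obtain ⟨h1, _⟩ := List.append_inj hbig hlen2
    exact ⟨b, c', by simpa [List.append_assoc] using h1⟩

end Aux3

section Aux4

variable {A : Type*}

lemma aux_mono_stab (f : ℕ → ℕ) (G : ℕ) (hm : ∀ n, f n ≤ f (n + 1)) (hb : ∀ n, f n ≤ G) :
    ∃ N, ∀ n, N ≤ n → f n = f N := by
  by_contra hcon
  push_neg at hcon
  have hmono : Monotone f := monotone_nat_of_le_succ hm
  have key : ∀ k, ∃ n, f 0 + k ≤ f n := by
    intro k
    induction k with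
    | zero => exact ⟨0, by omega⟩
    | succ k ih =>
      obtain ⟨n, hn⟩ := ih
      obtain ⟨n', hn', hne⟩ := hcon n
      have h1 : f n ≤ f n' := hmono hn'
      have h2 : f n ≠ f n' := fun h => hne h.symm
      exact ⟨n', by omega⟩
  obtain ⟨n, hn⟩ := key (G + 1)
  have := hb n
  omega

lemma aux_gamma_eq (Θ : List A → List A) (w : List A) :
    {P : Set A | ∃ a, a ∈ w ∧ Θ [a] ≠ [a] ∧ P = {b | [b] = [a] ∨ [b] = Θ [a]}} =
      (fun a => {b | [b] = [a] ∨ [b] = Θ [a]}) '' {a | a ∈ w ∧ Θ [a] ≠ [a]} := by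
  ext P
  simp only [Set.mem_setOf_eq, Set.mem_image]
  constructor
  · rintro ⟨a, h1, h2, h3⟩
    exact ⟨a, ⟨h1, h2⟩, h3.symm⟩
  · rintro ⟨a, ⟨h1, h2⟩, h3⟩
    exact ⟨a, h1, h2, h3.symm⟩

lemma aux_gamma_mono [Fintype A] {Θ : List A → List A} {p q : List A} (h : p <+: q) :
    gammaTheta Θ p ≤ gammaTheta Θ q := by
  apply Set.ncard_le_ncard
  · rintro P ⟨a, h1, h2, h3⟩
    exact ⟨a, h.subset h1, h2, h3⟩
  · rw [aux_gamma_eq]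
    exact Set.Finite.image _ (Set.toFinite _)

lemma aux_gamma_bound [Fintype A] (Θ : List A → List A) (w : List A) :
    gammaTheta Θ w ≤ Fintype.card A := by
  unfold gammaTheta
  rw [aux_gamma_eq]
  calc ((fun a => {b | [b] = [a] ∨ [b] = Θ [a]}) '' {a | a ∈ w ∧ Θ [a] ≠ [a]}).ncard
      ≤ ({a | a ∈ w ∧ Θ [a] ≠ [a]} : Set A).ncard := Set.ncard_image_le (Set.toFinite _)
    _ ≤ (Set.univ : Set A).ncard := Set.ncard_le_ncard (Set.subset_univ _) (Set.toFinite _)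
    _ = Fintype.card A := by rw [Set.ncard_univ, Nat.card_eq_fintype_card]

/-- Main consequence of finite defect: past some point, the longest `Θ`-palindromic
suffix of every prefix occurs only as a suffix. -/
lemma aux_key [Fintype A] {Θ : List A → List A} (hΘ : IsAntimorphism Θ) (u : ℕ → A)
    (hdef : FiniteDefect Θ u) :
    ∃ N : ℕ, ∀ n, N < n → ∀ i, OccursIn (psuf Θ (prefixWord u n)) (prefixWord u n) i →
      i + plen Θ (prefixWord u n) = n := by
  classical
  obtain ⟨C, hC⟩ := hdef
  have hdC : ∀ n, defect Θ (prefixWord u n) ≤ C := by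
    intro n
    apply hC
    refine ⟨0, ?_⟩
    show prefixWord u n = factorAt u 0 (prefixWord u n).length
    rw [aux_pre_len]
    rfl
  have hd : ∀ n, defect Θ (prefixWord u n) =
      (n : ℤ) + 1 - gammaTheta Θ (prefixWord u n) - (palSet Θ (prefixWord u n)).ncard := by
    intro n
    unfold defect
    rw [aux_pre_len]
  obtain ⟨N₀, hN₀⟩ := aux_mono_stab (fun n => gammaTheta Θ (prefixWord u n)) (Fintype.card A)
    (fun n => aux_gamma_mono (aux_pre_prefix u (by omega)))
    (fun n => aux_gamma_bound Θ _)
  have hPm : ∀ n, (palSet Θ (prefixWord u n)).ncard ≤ (palSet Θ (prefixWord u (n + 1))).ncard :=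
    fun n => Set.ncard_le_ncard (aux_palSet_mono (aux_pre_prefix u (by omega)))
      (aux_palSet_finite Θ _)
  have hPs : ∀ n, (palSet Θ (prefixWord u (n + 1))).ncard ≤ (palSet Θ (prefixWord u n)).ncard + 1 := by
    intro n
    rw [aux_pre_succ]
    exact aux_step hΘ _ _
  have hγc : ∀ n, N₀ ≤ n → gammaTheta Θ (prefixWord u n) = gammaTheta Θ (prefixWord u N₀) :=
    hN₀
  have hdm : ∀ n, N₀ ≤ n → defect Θ (prefixWord u n) ≤ defect Θ (prefixWord u (n + 1)) := by
    intro n hn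
    rw [hd, hd, hγc n hn, hγc (n + 1) (by omega)]
    have h1 := hPs n
    have h2 := hPm n
    push_cast
    omega
  have hf0 : ∀ k, defect Θ (prefixWord u N₀) ≤ defect Θ (prefixWord u (N₀ + k)) := by
    intro k
    induction k with
    | zero => simp
    | succ k ih =>
      have := hdm (N₀ + k) (by omega)
      rw [show N₀ + (k + 1) = (N₀ + k) + 1 by omega]
      omega
  have hfm : ∀ k, (defect Θ (prefixWord u (N₀ + k)) - defect Θ (prefixWord u N₀)).toNat ≤
      (defect Θ (prefixWord u (N₀ + (k + 1))) - defect Θ (prefixWord u N₀)).toNat := by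
    intro k
    apply Int.toNat_le_toNat
    have h := hdm (N₀ + k) (by omega)
    rw [show N₀ + (k + 1) = N₀ + k + 1 by omega]
    omega
  have hfb : ∀ k, (defect Θ (prefixWord u (N₀ + k)) - defect Θ (prefixWord u N₀)).toNat ≤
      (C - defect Θ (prefixWord u N₀)).toNat := by
    intro k
    apply Int.toNat_le_toNat
    have := hdC (N₀ + k)
    omega
  obtain ⟨K, hK⟩ := aux_mono_stab
    (fun k => (defect Θ (prefixWord u (N₀ + k)) - defect Θ (prefixWord u N₀)).toNat)
    ((C - defect Θ (prefixWord u N₀)).toNat) hfm hfb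
  have hdc : ∀ k, K ≤ k → defect Θ (prefixWord u (N₀ + k)) = defect Θ (prefixWord u (N₀ + K)) := by
    intro k hk
    have h1 := hK k hk
    have h2 := hf0 k
    have h3 := hf0 K
    omega
  refine ⟨N₀ + K, ?_⟩
  intro n hn i hi
  obtain ⟨nn, rfl⟩ : ∃ nn, n = nn + 1 := ⟨n - 1, by omega⟩
  have h1 : defect Θ (prefixWord u (nn + 1)) = defect Θ (prefixWord u nn) := by
    have e1 := hdc (nn + 1 - N₀) (by omega)
    have e2 := hdc (nn - N₀) (by omega)
    rw [show N₀ + (nn + 1 - N₀) = nn + 1 by omega] at e1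
    rw [show N₀ + (nn - N₀) = nn by omega] at e2
    omega
  have hPe : (palSet Θ (prefixWord u (nn + 1))).ncard ≠ (palSet Θ (prefixWord u nn)).ncard := by
    intro hcard
    rw [hd, hd, hγc nn (by omega), hγc (nn + 1) (by omega), hcard] at h1
    omega
  rw [aux_pre_succ] at hPe hi ⊢
  have := aux_uniocc hΘ (prefixWord u nn) (u nn) hPe i hi
  rw [aux_pre_len] at this
  omega

end Aux4

section Aux5

variable {A : Type*}

/-- Core lemma: if `v` has `w` as prefix and as suffix (at offset `d`) and contains no
occurrence of `Θ w`, and `w` is long enough, then at any occurrence `m` of `v` in `u`,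
the word `Θ v` occurs at some position `b` with `b + d < m`. -/
lemma aux_core {Θ : List A → List A} (hΘ : IsAntimorphism Θ) {u : ℕ → A} {N : ℕ}
    (hU : ∀ n, N < n → ∀ i, OccursIn (psuf Θ (prefixWord u n)) (prefixWord u n) i →
      i + plen Θ (prefixWord u n) = n)
    (w v : List A) (d : ℕ) (hd : 1 ≤ d) (hlen : v.length = d + w.length)
    (hw : N + 2 ≤ w.length)
    (h0 : OccursIn w v 0) (hD : OccursIn w v d)
    (hno : ∀ t, t ≤ d → ¬ OccursIn (Θ w) v t)
    (m : ℕ) (hocc : OccursAt u v m) :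
    ∃ b, OccursAt u (Θ v) b ∧ b + d < m := by
  have hNlt : N < m + v.length := by omega
  have hplength : (prefixWord u (m + v.length)).length = m + v.length := aux_pre_len u _
  have hxsuf : psuf Θ (prefixWord u (m + v.length)) <:+ prefixWord u (m + v.length) :=
    aux_psuf_suffix Θ _
  have hxpal : Θ (psuf Θ (prefixWord u (m + v.length))) = psuf Θ (prefixWord u (m + v.length)) :=
    aux_psuf_pal hΘ _
  have hxlen : (psuf Θ (prefixWord u (m + v.length))).length = plen Θ (prefixWord u (m + v.length)) :=
    aux_psuf_length Θ _
  have hxle : (psuf Θ (prefixWord u (m + v.length))).length ≤ m + v.length := by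
    have h := hxsuf.length_le
    rwa [hplength] at h
  have hvp : OccursIn v (prefixWord u (m + v.length)) m :=
    (aux_occursAt_iff u v m (m + v.length) (by omega)).mp hocc
  have hvsuf : v <:+ prefixWord u (m + v.length) :=
    aux_occ_to_suffix hvp (by omega)
  have hwv : w <:+ v := aux_occ_to_suffix hD (by omega)
  have hwpre : w <+: v := aux_occ_to_prefix h0
  -- Step 1: the longest Θ-palindromic suffix is longer than v
  have hstep1 : v.length < (psuf Θ (prefixWord u (m + v.length))).length := by
    by_contra hle
    push_neg at hle
    have hxv : psuf Θ (prefixWord u (m + v.length)) <:+ v :=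
      aux_suffix_suffix hxsuf hvsuf hle
    by_cases hxw : (psuf Θ (prefixWord u (m + v.length))).length ≤ w.length
    · -- unioccurrence violation: x is a suffix of w, occurring at both copies of w
      have hx_w : psuf Θ (prefixWord u (m + v.length)) <:+ w :=
        aux_suffix_suffix hxv hwv hxw
      have o1 : OccursIn (psuf Θ (prefixWord u (m + v.length)))
          (prefixWord u (m + v.length))
          (m + (0 + (w.length - (psuf Θ (prefixWord u (m + v.length))).length))) :=
        aux_occ_trans hvp (aux_occ_trans h0 (aux_occ_suffix hx_w))
      have h2 := hU _ hNlt _ o1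
      rw [← hxlen] at h2
      omega
    · push_neg at hxw
      have hwx : w <:+ psuf Θ (prefixWord u (m + v.length)) :=
        aux_suffix_suffix hwv hxv (by omega)
      have hpre : Θ w <+: psuf Θ (prefixWord u (m + v.length)) :=
        aux_pal_prefix hΘ hwx hxpal
      have o1 : OccursIn (Θ w) v (v.length - (psuf Θ (prefixWord u (m + v.length))).length + 0) :=
        aux_occ_trans (aux_occ_suffix hxv) (aux_occ_prefix hpre)
      exact hno _ (by omega) o1
  -- v is a suffix of x, hence Θ v is a prefix of x
  have hvx : v <:+ psuf Θ (prefixWord u (m + v.length)) :=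
    aux_suffix_suffix hvsuf hxsuf (by omega)
  have hΘv : Θ v <+: psuf Θ (prefixWord u (m + v.length)) :=
    aux_pal_prefix hΘ hvx hxpal
  have hΘvlen : (Θ v).length = v.length := aux_theta_len Θ hΘ v
  have hΘwlen : (Θ w).length = w.length := aux_theta_len Θ hΘ w
  -- Step 2: x is so long that the Θ v prefix ends before position m
  have hstep2 : 2 * v.length + 1 ≤ (psuf Θ (prefixWord u (m + v.length))).length + w.length := by
    by_contra hc
    push_neg at hc
    -- Θ w occurs in Θ v at offset d
    have hvdec : v = v.take w.length ++ v.drop w.length := (List.take_append_drop _ _).symm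
    have hdecomp : Θ v = Θ (v.drop w.length) ++ Θ w := by
      conv_lhs => rw [hvdec]
      rw [aux_prefix_take hwpre] at hvdec ⊢
      rw [hΘ.1]
    have o1 : OccursIn (Θ w) (Θ v) d := by
      apply aux_occursIn_iff.mpr
      refine ⟨Θ (v.drop w.length), [], by rw [hdecomp]; simp, ?_⟩
      rw [aux_theta_len Θ hΘ]
      simp [List.length_drop]
      omega
    have o2 : OccursIn (Θ w) (psuf Θ (prefixWord u (m + v.length))) (0 + d) :=
      aux_occ_trans (aux_occ_prefix hΘv) o1
    have o3 : OccursIn (Θ w) (prefixWord u (m + v.length))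
        ((m + v.length - (psuf Θ (prefixWord u (m + v.length))).length) + (0 + d)) := by
      have := aux_occ_trans (aux_occ_suffix hxsuf) o2
      rwa [hplength] at this
    have o4 : OccursAt u (Θ w)
        ((m + v.length - (psuf Θ (prefixWord u (m + v.length))).length) + (0 + d)) := by
      refine (aux_occursAt_iff u (Θ w) _ (m + v.length) ?_).mpr o3
      rw [hΘwlen]
      omega
    have o5 : OccursIn (Θ w) v
        ((m + v.length - (psuf Θ (prefixWord u (m + v.length))).length) + (0 + d) - m) := by
      refine aux_occursIn_of_occursAt hocc ?_ ?_
      · rw [show m + ((m + v.length - (psuf Θ (prefixWord u (m + v.length))).length) + (0 + d) - m)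
            = (m + v.length - (psuf Θ (prefixWord u (m + v.length))).length) + (0 + d) by omega]
        exact o4
      · rw [hΘwlen]
        omega
    refine hno _ ?_ o5
    omega
  -- conclusion
  refine ⟨m + v.length - (psuf Θ (prefixWord u (m + v.length))).length, ?_, by omega⟩
  have o1 : OccursIn (Θ v) (prefixWord u (m + v.length))
      ((m + v.length - (psuf Θ (prefixWord u (m + v.length))).length) + 0) := by
    have := aux_occ_trans (aux_occ_suffix hxsuf) (aux_occ_prefix hΘv)
    rwa [hplength] at this
  have o2 := (aux_occursAt_iff u (Θ v)
      ((m + v.length - (psuf Θ (prefixWord u (m + v.length))).length) + 0) (m + v.length)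
      (by rw [hΘvlen]; omega)).mpr o1
  rwa [Nat.add_zero] at o2

/-- There is no factor `v` of `u` of the given "complete-return-without-`Θ w`" shape. -/
lemma aux_noCR {Θ : List A → List A} (hΘ : IsAntimorphism Θ) {u : ℕ → A} {N : ℕ}
    (hU : ∀ n, N < n → ∀ i, OccursIn (psuf Θ (prefixWord u n)) (prefixWord u n) i →
      i + plen Θ (prefixWord u n) = n)
    (w v : List A) (d : ℕ) (hd : 1 ≤ d) (hlen : v.length = d + w.length)
    (hw : N + 2 ≤ w.length)
    (h0 : OccursIn w v 0) (hD : OccursIn w v d)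
    (hno : ∀ t, t ≤ d → ¬ OccursIn (Θ w) v t)
    (hfac : IsFactorOf v u) : False := by
  classical
  have exmin : ∀ z : List A, IsFactorOf z u →
      ∃ m, OccursAt u z m ∧ ∀ k, OccursAt u z k → m ≤ k := by
    intro z hz
    exact ⟨Nat.find hz, Nat.find_spec hz, fun k hk => Nat.find_le hk⟩
  obtain ⟨m, hm, hmle⟩ := exmin v hfac
  obtain ⟨b1, hb1, hb1lt⟩ := aux_core hΘ hU w v d hd hlen hw h0 hD hno m hm
  obtain ⟨m', hm', hm'le⟩ := exmin (Θ v) ⟨b1, hb1⟩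
  have hlen' : (Θ v).length = d + (Θ w).length := by
    rw [aux_theta_len Θ hΘ, aux_theta_len Θ hΘ]
    exact hlen
  have h0' : OccursIn (Θ w) (Θ v) 0 := by
    have h := aux_occ_mirror hΘ hD
    rwa [show v.length - d - w.length = 0 by omega] at h
  have hD' : OccursIn (Θ w) (Θ v) d := by
    have h := aux_occ_mirror hΘ h0
    rwa [show v.length - 0 - w.length = d by omega] at h
  have hno' : ∀ t, t ≤ d → ¬ OccursIn (Θ (Θ w)) (Θ v) t := by
    intro t ht hocc
    rw [hΘ.2] at hocc
    have hb := hocc.1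
    rw [aux_theta_len Θ hΘ] at hb
    have h := aux_occ_mirror hΘ hocc
    rw [hΘ.2, aux_theta_len Θ hΘ] at h
    exact hno _ (by omega) h
  have hw' : N + 2 ≤ (Θ w).length := by
    rw [aux_theta_len Θ hΘ]
    exact hw
  obtain ⟨b2, hb2, hb2lt⟩ := aux_core hΘ hU (Θ w) (Θ v) d hd hlen' hw' h0' hD' hno' m' hm'
  rw [hΘ.2] at hb2
  have h1 := hmle b2 hb2
  have h2 := hm'le b1 hb1
  omega

end Aux5




/-- **Proposition 6, item 2.** For a recurrent word with finite `Θ`-defect there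
is a positive integer `H` such that the occurrences of `w` and `Θ(w)` alternate
for every factor `w` longer than `H`. -/
theorem occurrences_alternate_of_finite_defect
    {A : Type*} [Fintype A] (Θ : List A → List A) (hΘ : IsAntimorphism Θ)
    (u : ℕ → A) (hrec : Recurrent u) (hdef : FiniteDefect Θ u) :
    ∃ H : ℕ, 0 < H ∧ ∀ w : List A, IsFactorOf w u → H < w.length →
      AlternateIn u w (Θ w) := by
  obtain ⟨N, hU⟩ := aux_key hΘ u hdef
  refine ⟨N + 1, by omega, ?_⟩
  intro w _ hwlen
  have hΘlen : ∀ x : List A, (Θ x).length = x.length := aux_theta_len Θ hΘ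
  -- one-sided statement
  have OS : ∀ w' : List A, N + 2 ≤ w'.length → ∀ i j, i < j → OccursAt u w' i →
      OccursAt u w' j → ¬ OccursAt u (Θ w') j →
      ∃ k, i < k ∧ k < j ∧ OccursAt u (Θ w') k := by
    intro w' hw' i j hij hi hj hnj
    by_contra hcon
    push_neg at hcon
    have hvlen : (factorAt u i (j - i + w'.length)).length = j - i + w'.length :=
      aux_factorAt_length u i _
    have hoccv : OccursAt u (factorAt u i (j - i + w'.length)) i := by
      show factorAt u i (j - i + w'.length) =
        factorAt u i (factorAt u i (j - i + w'.length)).length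
      rw [hvlen]
    have h0 : OccursIn w' (factorAt u i (j - i + w'.length)) 0 :=
      aux_occursIn_of_occursAt hoccv (by rw [Nat.add_zero]; exact hi) (by omega)
    have hD : OccursIn w' (factorAt u i (j - i + w'.length)) (j - i) :=
      aux_occursIn_of_occursAt hoccv (by rw [show i + (j - i) = j by omega]; exact hj)
        (by omega)
    have hno : ∀ t, t ≤ j - i → ¬ OccursIn (Θ w') (factorAt u i (j - i + w'.length)) t := by
      intro t ht hocc
      have hAt : OccursAt u (Θ w') (i + t) := aux_occursAt_of_occursIn hoccv hocc
      have hthw : Θ w' = factorAt u (i + t) w'.length := by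
        rw [← hΘlen w']
        exact hAt
      by_cases h1 : t = 0
      · -- then Θ w' = w', so Θ w' occurs at j as well, contradiction
        subst h1
        rw [Nat.add_zero] at hthw
        have heq : Θ w' = w' := by rw [hthw, ← hi]
        exact hnj (by rw [heq]; exact hj)
      · by_cases h2 : t = j - i
        · subst h2
          rw [show i + (j - i) = j by omega] at hAt
          exact hnj hAt
        · exact hcon (i + t) (by omega) (by omega) hAt
    exact aux_noCR hΘ hU w' (factorAt u i (j - i + w'.length)) (j - i) (by omega) hvlen hw'
      h0 hD hno ⟨i, hoccv⟩
  constructor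
  · intro i j hij h1 h2 h3
    exact OS w (by omega) i j hij h1 h2 h3
  · intro i j hij h1 h2 h3
    have h3' : ¬ OccursAt u (Θ (Θ w)) j := by rw [hΘ.2]; exact h3
    obtain ⟨k, hk1, hk2, hk3⟩ := OS (Θ w) (by rw [hΘlen]; omega) i j hij h1 h2 h3'
    rw [hΘ.2] at hk3
    exact ⟨k, hk1, hk2, hk3⟩
end

section
/- Let Θ : A* → A* be an involutive antimorphism and let u ∈ A^ℕ be a recurrent infinite word with finite Θ-palindromic defect. Then there exists a positive integer H such that for every integer n > H one has C(n+1) − C(n) + 2 = P_Θ(n) + P_Θ(n+1), where C is the factor complexity of u and P_Θ its Θ-palindromic complexity (equivalently, T_Θ(n) = 0 for all n > H). -/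
namespace PalProof
set_option linter.unusedSectionVars false

variable {A : Type*} {Θ : List A → List A}


variable {A : Type*} {Θ : List A → List A}

section Anti

theorem theta_nil (hΘ : IsAntimorphism Θ) : Θ [] = [] := by
  have h : Θ ([] ++ []) = Θ [] ++ Θ [] := hΘ.1 [] []
  simp only [List.append_nil] at h
  have hl : (Θ ([] : List A)).length = (Θ ([] : List A)).length + (Θ ([] : List A)).length := by
    conv_lhs => rw [h]
    simp
  have : (Θ ([] : List A)).length = 0 := by omega
  exact List.eq_nil_of_length_eq_zero this

theorem theta_length (hΘ : IsAntimorphism Θ) (l : List A) : (Θ l).length = l.length := by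
  have hge : ∀ l : List A, l.length ≤ (Θ l).length := by
    intro l
    induction l with
    | nil => simp
    | cons a t ih =>
      have h : Θ (a :: t) = Θ t ++ Θ [a] := by
        have := hΘ.1 [a] t; simpa using this
      have ha : Θ [a] ≠ [] := by
        intro hnil
        have h2 := hΘ.2 [a]
        rw [hnil, theta_nil hΘ] at h2
        simp at h2
      have h1 : 1 ≤ (Θ [a]).length := by
        cases h' : Θ [a] with
        | nil => exact absurd h' ha
        | cons x xs => simp
      rw [h]
      simp only [List.length_append, List.length_cons]
      omega
  have h1 := hge l
  have h2 := hge (Θ l)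
  rw [hΘ.2 l] at h2
  omega

theorem theta_suffix_prefix (hΘ : IsAntimorphism Θ) {s w : List A} (h : s <:+ w) :
    Θ s <+: Θ w := by
  obtain ⟨t, rfl⟩ := h
  exact ⟨Θ t, (hΘ.1 t s).symm⟩

theorem theta_prefix_suffix (hΘ : IsAntimorphism Θ) {s w : List A} (h : s <+: w) :
    Θ s <:+ Θ w := by
  obtain ⟨t, rfl⟩ := h
  exact ⟨Θ t, (hΘ.1 s t).symm⟩

theorem theta_infix (hΘ : IsAntimorphism Θ) {s w : List A} (h : s <:+: w) :
    Θ s <:+: Θ w := by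
  obtain ⟨t, r, rfl⟩ := h
  refine ⟨Θ r, Θ t, ?_⟩
  rw [hΘ.1 (t ++ s) r, hΘ.1 t s, List.append_assoc]

theorem theta_inj (hΘ : IsAntimorphism Θ) : Function.Injective Θ := by
  intro a b h
  have h2 := congrArg Θ h
  rwa [hΘ.2, hΘ.2] at h2

end Anti

section Pref

variable (u : ℕ → A)

theorem length_factorAt (i n : ℕ) : (factorAt u i n).length = n := by
  simp [factorAt]

theorem length_pref (n : ℕ) : (prefixWord u n).length = n := by
  simp [prefixWord, factorAt]

theorem pref_split (i n : ℕ) :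
    prefixWord u (i + n) = prefixWord u i ++ factorAt u i n := by
  simp only [prefixWord, factorAt, List.range_add, List.map_append, List.map_map]
  congr 1
  exact List.map_congr_left fun x _ => by simp [Function.comp]

theorem pref_drop (i n : ℕ) : (prefixWord u (i + n)).drop i = factorAt u i n := by
  rw [pref_split]
  rw [List.drop_append_of_le_length (by simp [length_pref])]
  rw [List.drop_of_length_le (by simp [length_pref])]
  simp

theorem pref_take (m M : ℕ) (h : m ≤ M) :
    (prefixWord u M).take m = prefixWord u m := by
  obtain ⟨k, rfl⟩ := Nat.exists_eq_add_of_le h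
  rw [pref_split]
  rw [List.take_append_of_le_length (by simp [length_pref])]
  rw [List.take_of_length_le (by simp [length_pref])]

theorem pref_prefix {m M : ℕ} (h : m ≤ M) : prefixWord u m <+: prefixWord u M := by
  rw [← pref_take u m M h]; exact List.take_prefix _ _

theorem occursAt_iff_suffix (w : List A) (i : ℕ) :
    OccursAt u w i ↔ w <:+ prefixWord u (i + w.length) := by
  constructor
  · intro h
    rw [pref_split]
    exact ⟨prefixWord u i, by rw [← h]⟩
  · intro h
    rw [List.suffix_iff_eq_drop, length_pref, Nat.add_sub_cancel] at h
    rw [OccursAt, ← pref_drop u i w.length]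
    exact h

/-- `Ends w m` : the word `w` occurs in `u` ending at position `m`. -/
def Ends (w : List A) (m : ℕ) : Prop := w <:+ prefixWord u m

theorem isFactor_iff_ends (w : List A) : IsFactorOf w u ↔ ∃ m, Ends u w m := by
  constructor
  · rintro ⟨i, h⟩
    exact ⟨i + w.length, (occursAt_iff_suffix u w i).1 h⟩
  · rintro ⟨m, h⟩
    have hlen : w.length ≤ m := by
      have := h.length_le; rwa [length_pref] at this
    obtain ⟨i, hi⟩ := Nat.exists_eq_add_of_le hlen
    refine ⟨m - w.length, (occursAt_iff_suffix u w _).2 ?_⟩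
    have : m - w.length + w.length = m := Nat.sub_add_cancel hlen
    rwa [this]

theorem ends_mono {w : List A} {m M : ℕ} (h : Ends u w m) (hm : m ≤ M) :
    w <:+: prefixWord u M :=
  h.isInfix.trans (pref_prefix u hm).isInfix

theorem infix_pref_iff (w : List A) (M : ℕ) :
    w <:+: prefixWord u M ↔ ∃ m ≤ M, Ends u w m := by
  constructor
  · rintro ⟨t, r, htr⟩
    refine ⟨t.length + w.length, ?_, ?_⟩
    · have := congrArg List.length htr
      simp only [List.length_append, length_pref] at this
      omega
    · have hle : t.length + w.length ≤ M := by
        have := congrArg List.length htr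
        simp only [List.length_append, length_pref] at this
        omega
      rw [Ends, ← pref_take u _ M hle, ← htr]
      rw [List.take_append_of_le_length (by simp)]
      rw [List.take_of_length_le (by simp)]
      exact ⟨t, rfl⟩
  · rintro ⟨m, hm, h⟩
    exact ends_mono u h hm

theorem factor_of_infix_pref {w : List A} {M : ℕ} (h : w <:+: prefixWord u M) :
    IsFactorOf w u := by
  rw [infix_pref_iff] at h
  obtain ⟨m, _, hm⟩ := h
  exact (isFactor_iff_ends u w).2 ⟨m, hm⟩

theorem factor_of_ends {w : List A} {m : ℕ} (h : Ends u w m) : IsFactorOf w u :=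
  (isFactor_iff_ends u w).2 ⟨m, h⟩

theorem factor_of_infix {v w : List A} (h : v <:+: w) (hw : IsFactorOf w u) :
    IsFactorOf v u := by
  rw [isFactor_iff_ends] at hw
  obtain ⟨m, hm⟩ := hw
  exact factor_of_infix_pref u (h.trans hm.isInfix)

/-- suffix of same length: equal -/
theorem suffix_eq_of_length {l₁ l₂ l : List A} (h₁ : l₁ <:+ l) (h₂ : l₂ <:+ l)
    (hl : l₁.length = l₂.length) : l₁ = l₂ := by
  rw [List.suffix_iff_eq_drop] at h₁ h₂
  rw [h₁, h₂, hl]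

/-- shorter suffix is suffix of longer suffix -/
theorem suffix_suffix_of_le {l₁ l₂ l : List A} (h₁ : l₁ <:+ l) (h₂ : l₂ <:+ l)
    (hl : l₁.length ≤ l₂.length) : l₁ <:+ l₂ := by
  have hl2 : l₂.length ≤ l.length := h₂.length_le
  have e₁ : l₁ = List.drop (l.length - l₁.length) l := List.suffix_iff_eq_drop.mp h₁
  have e₂ : l₂ = List.drop (l.length - l₂.length) l := List.suffix_iff_eq_drop.mp h₂
  have key : List.drop (l₂.length - l₁.length) l₂ = l₁ := by
    conv_rhs => rw [e₁]
    nth_rewrite 2 [e₂]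
    rw [List.drop_drop]
    congr 1
    omega
  rw [← key]
  exact List.drop_suffix _ _

end Pref


section PartB

variable (u : ℕ → A)

/-- first end position of a word in `u`. -/
noncomputable def fe (w : List A) : ℕ := sInf {m | Ends u w m}

theorem fe_le {w : List A} {m : ℕ} (h : Ends u w m) : fe u w ≤ m :=
  Nat.sInf_le h

theorem ends_fe {w : List A} {m : ℕ} (h : Ends u w m) : Ends u w (fe u w) := by
  have : fe u w ∈ {m | Ends u w m} := Nat.sInf_mem (⟨m, h⟩ : Set.Nonempty {m | Ends u w m})
  exact this

theorem length_le_fe {w : List A} {m : ℕ} (h : Ends u w m) : w.length ≤ fe u w := by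
  have h2 := ends_fe u h
  have := h2.length_le
  rwa [length_pref] at this

theorem ends_take {q q' : List A} {m : ℕ} (hpre : q <+: q') (hend : Ends u q' m) :
    Ends u q (m - q'.length + q.length) := by
  obtain ⟨t, ht⟩ := hend
  obtain ⟨r, hr⟩ := hpre
  have hlen : t.length + q'.length = m := by
    have := congrArg List.length ht
    simp only [List.length_append, length_pref] at this
    omega
  have hle : t.length + q.length ≤ m := by
    have := congrArg List.length hr
    simp only [List.length_append] at this
    omega
  have hkey : prefixWord u (t.length + q.length) = t ++ q := by
    rw [← pref_take u _ m hle, ← ht, ← hr, ← List.append_assoc]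
    have : t.length + q.length = (t ++ q).length := by simp
    rw [this, List.take_left]
  have : Ends u q (t.length + q.length) := by
    rw [Ends, hkey]; exact ⟨t, rfl⟩
  have harg : t.length + q.length = m - q'.length + q.length := by omega
  rwa [harg] at this

/-- a new palindrome at step `m+1` -/
theorem new_pal_step (hΘ : IsAntimorphism Θ) {q : List A} {m : ℕ}
    (hmem : q ∈ palSet Θ (prefixWord u (m+1)) \ palSet Θ (prefixWord u m)) :
    q ≠ [] ∧ Θ q = q ∧ Ends u q (m+1) ∧ fe u q = m+1 := by
  obtain ⟨⟨hinf, hpal⟩, hnot⟩ := hmem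
  have hne : q ≠ [] := by
    rintro rfl
    exact hnot ⟨List.nil_infix, theta_nil hΘ⟩
  have hends : Ends u q (m+1) := by
    rw [infix_pref_iff] at hinf
    obtain ⟨m', hm', hE⟩ := hinf
    rcases Nat.lt_or_ge m' (m+1) with h | h
    · exact absurd ⟨ends_mono u hE (by omega), hpal⟩ hnot
    · have : m' = m + 1 := by omega
      rwa [this] at hE
  refine ⟨hne, hpal, hends, ?_⟩
  have hle := fe_le u hends
  rcases Nat.lt_or_ge (fe u q) (m+1) with h | h
  · exact absurd ⟨ends_mono u (ends_fe u hends) (by omega), hpal⟩ hnot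
  · omega

/-- at most one new palindromic suffix at each step -/
theorem new_pal_unique (hΘ : IsAntimorphism Θ) {q q' : List A} {m : ℕ}
    (h1 : Θ q = q) (h2 : Ends u q m) (h3 : fe u q = m)
    (h1' : Θ q' = q') (h2' : Ends u q' m) (h3' : fe u q' = m) : q = q' := by
  have key : ∀ a b : List A, Θ a = a → Ends u a m → fe u a = m →
      Θ b = b → Ends u b m → fe u b = m → a.length ≤ b.length → a = b := by
    intro a b pa Ea fa pb Eb fb hab
    rcases Nat.eq_or_lt_of_le hab with heq | hlt
    · exact suffix_eq_of_length Ea Eb heq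
    · exfalso
      have hsuf : a <:+ b := suffix_suffix_of_le Ea Eb hab
      have hpre : a <+: b := by
        have := theta_suffix_prefix hΘ hsuf
        rwa [pa, pb] at this
      have hE := ends_take u hpre Eb
      have hlb : b.length ≤ m := by
        have := Eb.length_le; rwa [length_pref] at this
      have : fe u a ≤ m - b.length + a.length := fe_le u hE
      omega
  rcases le_total q.length q'.length with h | h
  · exact key q q' h1 h2 h3 h1' h2' h3' h
  · exact (key q' q h1' h2' h3' h1 h2 h3 h).symm

/-- `Good m` : a new nonempty Θ-palindromic suffix is completed at position `m`. -/
def Good (Θ : List A → List A) (m : ℕ) : Prop :=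
  ∃ q : List A, q ≠ [] ∧ Θ q = q ∧ Ends u q m ∧ fe u q = m

theorem palSet_mono {v w : List A} (h : v <+: w) : palSet Θ v ⊆ palSet Θ w :=
  fun _ hp => ⟨hp.1.trans h.isInfix, hp.2⟩

theorem palSet_finite (w : List A) : (palSet Θ w).Finite := by
  have hsub : palSet Θ w ⊆
      (fun ij : ℕ × ℕ => (w.drop ij.1).take ij.2) '' (Set.Iic w.length ×ˢ Set.Iic w.length) := by
    rintro p ⟨hinf, -⟩
    obtain ⟨t, r, htr⟩ := hinf
    refine ⟨(t.length, p.length), ⟨?_, ?_⟩, ?_⟩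
    · simp only [Set.mem_Iic]
      have := congrArg List.length htr; simp only [List.length_append] at this; omega
    · simp only [Set.mem_Iic]
      have := congrArg List.length htr; simp only [List.length_append] at this; omega
    · simp only
      rw [← htr, List.append_assoc, List.drop_left, List.take_left]
  exact Set.Finite.subset (Set.Finite.image _ (Set.Finite.prod (Set.finite_Iic _) (Set.finite_Iic _))) hsub

/-- the key dichotomy for each step -/
theorem step_dichotomy (hΘ : IsAntimorphism Θ) (m : ℕ) :
    (palSet Θ (prefixWord u (m+1))).ncard = (palSet Θ (prefixWord u m)).ncard + 1 ∧ Good u Θ (m+1) ∨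
    (palSet Θ (prefixWord u (m+1))).ncard = (palSet Θ (prefixWord u m)).ncard ∧
      ((palSet Θ (prefixWord u (m+1))).ncard = (palSet Θ (prefixWord u m)).ncard + 1 → False) := by
  classical
  have hmono : palSet Θ (prefixWord u m) ⊆ palSet Θ (prefixWord u (m+1)) :=
    palSet_mono (pref_prefix u (Nat.le_succ m))
  by_cases hdiff : (palSet Θ (prefixWord u (m+1)) \ palSet Θ (prefixWord u m)).Nonempty
  · obtain ⟨q, hq⟩ := hdiff
    obtain ⟨hne, hpal, hE, hfe⟩ := new_pal_step u hΘ hq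
    left
    constructor
    · have heq : palSet Θ (prefixWord u (m+1)) = insert q (palSet Θ (prefixWord u m)) := by
        apply Set.Subset.antisymm
        · intro q' hq'
          by_cases h' : q' ∈ palSet Θ (prefixWord u m)
          · exact Set.mem_insert_of_mem _ h'
          · obtain ⟨hne', hpal', hE', hfe'⟩ := new_pal_step u hΘ ⟨hq', h'⟩
            have : q = q' := new_pal_unique u hΘ hpal hE hfe hpal' hE' hfe'
            rw [← this]; exact Set.mem_insert _ _
        · rw [Set.insert_subset_iff]
          exact ⟨hq.1, hmono⟩
      rw [heq, Set.ncard_insert_of_notMem hq.2 (palSet_finite _)]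
    · exact ⟨q, hne, hpal, hE, hfe⟩
  · right
    have heq : palSet Θ (prefixWord u (m+1)) = palSet Θ (prefixWord u m) := by
      apply Set.Subset.antisymm _ hmono
      intro q hq
      by_contra h'
      exact hdiff ⟨q, hq, h'⟩
    rw [heq]
    exact ⟨rfl, by omega⟩

theorem pal_nil_mem (hΘ : IsAntimorphism Θ) (w : List A) : [] ∈ palSet Θ w :=
  ⟨List.nil_infix, theta_nil hΘ⟩

theorem palSet_nil (hΘ : IsAntimorphism Θ) : palSet Θ ([] : List A) = {[]} := by
  apply Set.Subset.antisymm
  · rintro p ⟨hinf, -⟩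
    have := hinf.length_le; simp at this
    simp [this]
  · rintro p hp
    simp at hp
    rw [hp]
    exact pal_nil_mem hΘ _

/-- prefixes are factors -/
theorem pref_isFactor (m : ℕ) : IsFactorOf (prefixWord u m) u :=
  ⟨0, by rw [OccursAt, length_pref]; rfl⟩

theorem gamma_bound [Fintype A] (w : List A) : gammaTheta Θ w ≤ Nat.card (Set A) := by
  rw [gammaTheta]
  have : Nat.card (Set A) = (Set.univ : Set (Set A)).ncard := by
    rw [Set.ncard_univ]
  rw [this]
  exact Set.ncard_le_ncard (Set.subset_univ _) Set.finite_univ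

/-- main result of part B : all but finitely many steps are good -/
theorem exists_good_bound [Fintype A] (hΘ : IsAntimorphism Θ) (hdef : FiniteDefect Θ u) :
    ∃ N₀ : ℕ, 1 ≤ N₀ ∧ ∀ m, N₀ < m → Good u Θ m := by
  classical
  obtain ⟨C, hC⟩ := hdef
  set Γ : ℤ := (Nat.card (Set A) : ℤ) with hΓ
  set DD : ℕ → ℤ := fun m => (m : ℤ) + 1 - (palSet Θ (prefixWord u m)).ncard with hDD
  have hDD0 : DD 0 = 0 := by
    simp only [hDD]
    rw [show prefixWord u 0 = [] from rfl, palSet_nil hΘ]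
    simp
  have hDDbound : ∀ m, DD m ≤ C + Γ := by
    intro m
    have h1 := hC (prefixWord u m) (pref_isFactor u m)
    rw [defect, length_pref] at h1
    have h2 : (gammaTheta Θ (prefixWord u m) : ℤ) ≤ Γ := by
      rw [hΓ]; exact_mod_cast gamma_bound _
    simp only [hDD]
    omega
  have hstep : ∀ m, (¬ Good u Θ (m+1) → DD (m+1) = DD m + 1) ∧ DD m ≤ DD (m+1) := by
    intro m
    rcases step_dichotomy u hΘ m with ⟨h1, h2⟩ | ⟨h1, -⟩
    · constructor
      · intro hng; exact absurd h2 hng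
      · simp only [hDD]; rw [h1]; push_cast; omega
    · constructor
      · intro _; simp only [hDD]; rw [h1]; push_cast; omega
      · simp only [hDD]; rw [h1]; push_cast; omega
  -- counting bad steps
  set badF : ℕ → Finset ℕ := fun M => (Finset.range (M+1)).filter (fun m => 1 ≤ m ∧ ¬ Good u Θ m)
    with hbadF
  have hcount : ∀ M, ((badF M).card : ℤ) ≤ DD M := by
    intro M
    induction M with
    | zero =>
      have : badF 0 = ∅ := by
        rw [hbadF]
        ext m
        simp only [Finset.mem_filter, Finset.mem_range, Finset.notMem_empty, iff_false]
        omega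
      rw [this]; simp [hDD0]
    | succ M ih =>
      have hsplit : badF (M+1) ⊆ insert (M+1) (badF M) := by
        intro m hm
        rw [hbadF] at hm ⊢
        simp only [Finset.mem_filter, Finset.mem_range] at hm
        rcases Nat.lt_or_ge m (M+1) with h | h
        · exact Finset.mem_insert_of_mem (by simp only [Finset.mem_filter, Finset.mem_range]; exact ⟨h, hm.2⟩)
        · have : m = M + 1 := by omega
          rw [this]; exact Finset.mem_insert_self _ _
      by_cases hg : Good u Θ (M+1)
      · have hsub : badF (M+1) ⊆ badF M := by
          intro m hm
          have := hsplit hm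
          rcases Finset.mem_insert.mp this with h | h
          · exfalso
            rw [hbadF] at hm
            simp only [Finset.mem_filter, Finset.mem_range] at hm
            rw [h] at hm
            exact hm.2.2 hg
          · exact h
        calc ((badF (M+1)).card : ℤ) ≤ (badF M).card := by
              exact_mod_cast Finset.card_le_card hsub
          _ ≤ DD M := ih
          _ ≤ DD (M+1) := (hstep M).2
      · have := (hstep M).1 hg
        calc ((badF (M+1)).card : ℤ) ≤ ((insert (M+1) (badF M)).card : ℤ) := by
              exact_mod_cast Finset.card_le_card hsplit
          _ ≤ (badF M).card + 1 := by
              exact_mod_cast Finset.card_insert_le _ _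
          _ ≤ DD M + 1 := by omega
          _ = DD (M+1) := ((hstep M).1 hg).symm
  -- the set of bad positions is finite
  set B : Set ℕ := {m | 1 ≤ m ∧ ¬ Good u Θ m} with hB
  have hBfin : B.Finite := by
    rw [← Set.not_infinite]
    intro hfin
    have hCΓ : (0:ℤ) ≤ C + Γ := le_trans (by rw [hDD0]) (hDDbound 0)
    obtain ⟨S, hS, hcard⟩ := Set.Infinite.exists_subset_card_eq hfin ((C+Γ).toNat + 1)
    have hSne : S.Nonempty := by
      rw [← Finset.card_pos, hcard]; omega
    set M := S.max' hSne with hM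
    have hsub : S ⊆ badF M := by
      intro m hm
      rw [hbadF]
      simp only [Finset.mem_filter, Finset.mem_range]
      have h1 := hS hm
      rw [hB] at h1
      exact ⟨by have := S.le_max' m hm; omega, h1.1, h1.2⟩
    have h1 : (S.card : ℤ) ≤ DD M := le_trans (by exact_mod_cast Finset.card_le_card hsub) (hcount M)
    rw [hcard] at h1
    have h2 := hDDbound M
    omega
  obtain ⟨n, hn⟩ : ∃ n, ∀ m ∈ B, m ≤ n := by
    refine ⟨hBfin.toFinset.sup id, fun m hm => ?_⟩
    exact Finset.le_sup (f := id) (by rwa [Set.Finite.mem_toFinset])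
  refine ⟨n + 1, by omega, fun m hm => ?_⟩
  by_contra hng
  have : m ∈ B := ⟨by omega, hng⟩
  have := hn m this
  omega

end PartB
section PartC
variable (u : ℕ → A)

theorem ends_of_occursAt {w : List A} {i : ℕ} (h : OccursAt u w i) :
    Ends u w (i + w.length) := (occursAt_iff_suffix u w i).1 h

/-- closure of the language under Θ, given recurrence and goodness beyond N₀. -/
theorem closure (hΘ : IsAntimorphism Θ) (hrec : Recurrent u) {N₀ : ℕ}
    (hN₀ : ∀ m, N₀ < m → Good u Θ m) {w : List A} (hw : IsFactorOf w u) :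
    IsFactorOf (Θ w) u := by
  obtain ⟨i, hi⟩ := hw
  set v := prefixWord u (i + w.length) with hv
  have hwv : w <:+ v := (occursAt_iff_suffix u w i).1 hi
  have hvfac : IsFactorOf v u := pref_isFactor u _
  obtain ⟨k, hk, hocc⟩ := hrec v hvfac (N₀ + 1)
  set m := k + v.length with hm
  have hvE : Ends u v m := ends_of_occursAt u hocc
  have hmN₀ : N₀ < m := by
    have : v.length ≤ m := by omega
    omega
  obtain ⟨q, hqne, hqpal, hqE, hqfe⟩ := hN₀ m hmN₀
  -- |q| > |v| : otherwise q is a suffix of v = prefixWord u v.length, contradicting fe q = m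
  have hlen : v.length < q.length := by
    by_contra hle
    push_neg at hle
    have hqv : q <:+ v := suffix_suffix_of_le hqE hvE hle
    have hlenv : v.length = i + w.length := length_pref u _
    have hEq : Ends u q (i + w.length) := by
      rw [Ends, ← hv]
      exact hqv
    have h1 := fe_le u hEq
    rw [hqfe] at h1
    have hk1 : 1 ≤ k := by omega
    omega
  have hvq : v <:+ q := suffix_suffix_of_le hvE hqE (le_of_lt hlen)
  have hwq : w <:+ q := hwv.trans hvq
  have : Θ w <+: Θ q := theta_suffix_prefix hΘ hwq
  rw [hqpal] at this
  exact factor_of_infix u this.isInfix (factor_of_ends u hqE)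

end PartC
section OC

/-- orbit counting for an involution -/
theorem orbit_count {α : Type*} (f : α → α) :
    ∀ k (S : Set α), S.ncard = k → S.Finite → (∀ x ∈ S, f x ∈ S) → (∀ x ∈ S, f (f x) = x) →
    2 * ((fun x => ({x, f x} : Set α)) '' S).ncard = S.ncard + {x | x ∈ S ∧ f x = x}.ncard := by
  intro k
  induction k using Nat.strong_induction_on with
  | _ k IH =>
    intro S hk hfin hstab hinv
    rcases Set.eq_empty_or_nonempty S with rfl | ⟨x, hx⟩
    · simp
    have hpos : 0 < S.ncard := (Set.ncard_pos hfin).mpr ⟨x, hx⟩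
    by_cases hfx : f x = x
    · -- remove the fixed point x
      set S' := S \ {x} with hS'
      have hfin' : S'.Finite := hfin.subset Set.diff_subset
      have hstab' : ∀ y ∈ S', f y ∈ S' := by
        rintro y ⟨hyS, hyx⟩
        refine ⟨hstab y hyS, ?_⟩
        simp only [Set.mem_singleton_iff] at hyx ⊢
        intro h
        apply hyx
        rw [← hinv y hyS, h, hfx]
      have hinv' : ∀ y ∈ S', f (f y) = y := fun y hy => hinv y hy.1
      have hcard : S.ncard = S'.ncard + 1 := by
        rw [hS', Set.ncard_diff_singleton_of_mem hx]
        omega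
      have hfix : {y | y ∈ S ∧ f y = y} = insert x {y | y ∈ S' ∧ f y = y} := by
        ext y
        simp only [Set.mem_setOf_eq, Set.mem_insert_iff, hS', Set.mem_diff,
          Set.mem_singleton_iff]
        constructor
        · rintro ⟨hyS, hfy⟩
          by_cases h : y = x
          · exact Or.inl h
          · exact Or.inr ⟨⟨hyS, h⟩, hfy⟩
        · rintro (rfl | ⟨⟨h1, _⟩, h2⟩)
          exacts [⟨hx, hfx⟩, ⟨h1, h2⟩]
      have hxnotfix' : x ∉ {y | y ∈ S' ∧ f y = y} := by
        rintro ⟨⟨-, hc⟩, -⟩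
        exact hc rfl
      have hcls : (fun y => ({y, f y} : Set α)) '' S =
          insert ({x} : Set α) ((fun y => ({y, f y} : Set α)) '' S') := by
        ext c
        simp only [Set.mem_image, Set.mem_insert_iff]
        constructor
        · rintro ⟨y, hyS, rfl⟩
          by_cases h : y = x
          · subst h
            left
            simp only [hfx, Set.pair_eq_singleton]
          · exact Or.inr ⟨y, ⟨hyS, h⟩, rfl⟩
        · rintro (rfl | ⟨y, hy, rfl⟩)
          · exact ⟨x, hx, by simp only [hfx, Set.pair_eq_singleton]⟩
          · exact ⟨y, hy.1, rfl⟩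
      have hxnotcls : ({x} : Set α) ∉ (fun y => ({y, f y} : Set α)) '' S' := by
        rintro ⟨y, hy, hc⟩
        have hc' : ({y, f y} : Set α) = ({x} : Set α) := hc
        have : y ∈ ({y, f y} : Set α) := by simp
        rw [hc'] at this
        simp only [Set.mem_singleton_iff] at this
        exact hy.2 this
      have hIH := IH S'.ncard (by omega) S' rfl hfin' hstab' hinv'
      rw [hcls, Set.ncard_insert_of_notMem hxnotcls (hfin'.image _), hfix,
        Set.ncard_insert_of_notMem hxnotfix' (hfin'.subset (fun y hy => hy.1)), hcard]
      omega
    · -- remove the pair {x, f x}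
      have hfxS := hstab x hx
      set S' := S \ {x, f x} with hS'
      have hfin' : S'.Finite := hfin.subset Set.diff_subset
      have hstab' : ∀ y ∈ S', f y ∈ S' := by
        rintro y ⟨hyS, hyp⟩
        simp only [Set.mem_insert_iff, Set.mem_singleton_iff, not_or] at hyp
        refine ⟨hstab y hyS, ?_⟩
        simp only [Set.mem_insert_iff, Set.mem_singleton_iff, not_or]
        constructor
        · intro h
          apply hyp.2
          rw [← hinv y hyS, h]
        · intro h
          apply hyp.1
          have := congrArg f h
          rw [hinv y hyS, hinv x hx] at this
          exact this
      have hinv' : ∀ y ∈ S', f (f y) = y := fun y hy => hinv y hy.1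
      have hpairsub : ({x, f x} : Set α) ⊆ S := by
        rintro y (rfl | hy)
        · exact hx
        · simp only [Set.mem_singleton_iff] at hy; rw [hy]; exact hfxS
      have hpaircard : ({x, f x} : Set α).ncard = 2 := by
        rw [Set.ncard_pair (Ne.symm hfx)]
      have hcard : S.ncard = S'.ncard + 2 := by
        rw [hS']
        rw [Set.ncard_diff hpairsub (hfin.subset hpairsub), hpaircard]
        have h2 : 2 ≤ S.ncard := by
          rw [← hpaircard]
          exact Set.ncard_le_ncard hpairsub hfin
        omega
      have hfix : {y | y ∈ S ∧ f y = y} = {y | y ∈ S' ∧ f y = y} := by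
        ext y
        simp only [Set.mem_setOf_eq, hS', Set.mem_diff, Set.mem_insert_iff,
          Set.mem_singleton_iff, not_or]
        constructor
        · rintro ⟨hyS, hfy⟩
          refine ⟨⟨hyS, ?_, ?_⟩, hfy⟩
          · rintro rfl; exact hfx hfy
          · rintro rfl; rw [hinv x hx] at hfy; exact hfx hfy.symm
        · rintro ⟨⟨h1, -, -⟩, h2⟩
          exact ⟨h1, h2⟩
      have hcls : (fun y => ({y, f y} : Set α)) '' S =
          insert ({x, f x} : Set α) ((fun y => ({y, f y} : Set α)) '' S') := by
        ext c
        simp only [Set.mem_image, Set.mem_insert_iff]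
        constructor
        · rintro ⟨y, hyS, rfl⟩
          by_cases h : y = x
          · subst h; exact Or.inl rfl
          by_cases h' : y = f x
          · subst h'
            left
            simp only [hinv x hx]
            exact Set.pair_comm _ _
          · exact Or.inr ⟨y, ⟨hyS, by simp only [Set.mem_insert_iff,
              Set.mem_singleton_iff, not_or]; exact ⟨h, h'⟩⟩, rfl⟩
        · rintro (rfl | ⟨y, hy, rfl⟩)
          · exact ⟨x, hx, rfl⟩
          · exact ⟨y, hy.1, rfl⟩
      have hxnotcls : ({x, f x} : Set α) ∉ (fun y => ({y, f y} : Set α)) '' S' := by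
        rintro ⟨y, hy, hc⟩
        have hc' : ({y, f y} : Set α) = ({x, f x} : Set α) := hc
        have hymem : y ∈ ({y, f y} : Set α) := by simp
        rw [hc'] at hymem
        have := hy.2
        simp only [hS', Set.mem_insert_iff, Set.mem_singleton_iff, not_or] at this ⊢
        rcases hymem with h | h
        · exact this.1 h
        · simp only [Set.mem_singleton_iff] at h
          exact this.2 h
      have hIH := IH S'.ncard (by omega) S' rfl hfin' hstab' hinv'
      rw [hcls, Set.ncard_insert_of_notMem hxnotcls (hfin'.image _), hfix, hcard]
      omega

end OC

section Graph

variable (u : ℕ → A)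

theorem factorAt_isFactor (i k : ℕ) : IsFactorOf (factorAt u i k) u :=
  ⟨i, by rw [OccursAt, length_factorAt]⟩

theorem factorAt_take (i n : ℕ) : (factorAt u i (n+1)).take n = factorAt u i n := by
  simp only [factorAt, ← List.map_take, List.take_range]
  congr 2
  omega

theorem factorAt_drop_one (i n : ℕ) : (factorAt u i (n+1)).drop 1 = factorAt u (i+1) n := by
  simp only [factorAt, List.range_succ_eq_map, List.map_cons, List.drop_succ_cons,
    List.drop_zero, List.map_map]
  exact List.map_congr_left fun x _ => by simp [Function.comp, Nat.succ_eq_add_one]; ring_nf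

theorem theta_take (hΘ : IsAntimorphism Θ) (l : List A) (k : ℕ) (hk : k ≤ l.length) :
    Θ (l.take k) = (Θ l).drop (l.length - k) := by
  have hsplit : l = l.take k ++ l.drop k := (List.take_append_drop k l).symm
  have h : Θ l = Θ (l.drop k) ++ Θ (l.take k) := by
    conv_lhs => rw [hsplit]
    exact hΘ.1 _ _
  have hsuf : Θ (l.take k) <:+ Θ l := ⟨Θ (l.drop k), h.symm⟩
  rw [List.suffix_iff_eq_drop] at hsuf
  rw [hsuf, theta_length hΘ, theta_length hΘ, List.length_take]
  congr 1
  omega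

theorem theta_drop (hΘ : IsAntimorphism Θ) (l : List A) (k : ℕ) :
    Θ (l.drop k) = (Θ l).take (l.length - k) := by
  have hsplit : l = l.take k ++ l.drop k := (List.take_append_drop k l).symm
  have h : Θ l = Θ (l.drop k) ++ Θ (l.take k) := by
    conv_lhs => rw [hsplit]
    exact hΘ.1 _ _
  have hpre : Θ (l.drop k) <+: Θ l := ⟨Θ (l.take k), h.symm⟩
  rw [List.prefix_iff_eq_take] at hpre
  rw [hpre, theta_length hΘ, List.length_drop]

/-- endpoint classes of an edge word -/
def pc (Θ : List A → List A) (n : ℕ) (z : List A) : Set (List A) := {z.take n, Θ (z.take n)}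
def sc (Θ : List A → List A) (z : List A) : Set (List A) := {z.drop 1, Θ (z.drop 1)}

theorem pal_pc_eq_sc (hΘ : IsAntimorphism Θ) {n : ℕ} {z : List A} (hz : z.length = n+1)
    (hpal : Θ z = z) : pc Θ n z = sc Θ z := by
  have h1 : Θ (z.take n) = z.drop 1 := by
    rw [theta_take hΘ z n (by omega), hpal, hz, Nat.add_sub_cancel_left]
  have h2 : Θ (z.drop 1) = z.take n := by
    rw [theta_drop hΘ z 1, hpal, hz, Nat.add_sub_cancel]
  rw [pc, sc, h1, h2]
  exact Set.pair_comm _ _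

theorem pc_theta (hΘ : IsAntimorphism Θ) {n : ℕ} {z : List A} (hz : z.length = n+1) :
    pc Θ n (Θ z) = sc Θ z ∧ sc Θ (Θ z) = pc Θ n z := by
  have hlz : (Θ z).length = n + 1 := by rw [theta_length hΘ, hz]
  have h1 : (Θ z).take n = Θ (z.drop 1) := by
    rw [theta_drop hΘ z 1, hz, Nat.add_sub_cancel]
  have h2 : (Θ z).drop 1 = Θ (z.take n) := by
    rw [theta_take hΘ z n (by omega), hz, Nat.add_sub_cancel_left]
  constructor
  · rw [pc, sc, h1, hΘ.2]
    exact Set.pair_comm _ _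
  · rw [pc, sc, h2, hΘ.2]
    exact Set.pair_comm _ _

section CoreGraph

variable [Fintype A] (n : ℕ)

/-- length-`n` factors -/
def LF (n : ℕ) : Set (List A) := {w : List A | IsFactorOf w u ∧ w.length = n}
/-- length-`n` palindromic factors -/
def PF (Θ : List A → List A) (n : ℕ) : Set (List A) :=
  {w : List A | IsFactorOf w u ∧ w.length = n ∧ Θ w = w}

theorem LF_finite : (LF u n).Finite :=
  Set.Finite.subset (List.finite_length_eq A n) (fun _ hw => hw.2)

theorem PF_subset : PF u Θ n ⊆ LF u n := fun _ hw => ⟨hw.1, hw.2.1⟩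

/-- the vertex classes -/
def CL (Θ : List A → List A) (n : ℕ) : Set (Set (List A)) :=
  (fun w => ({w, Θ w} : Set (List A))) '' (LF u n)

theorem CL_finite : (CL u Θ n).Finite := ((LF_finite u n).image _)

/-- non-palindromic edge classes -/
def NP (Θ : List A → List A) (n : ℕ) : Set (Set (List A)) :=
  (fun w => ({w, Θ w} : Set (List A))) '' (LF u (n+1) \ PF u Θ (n+1))

theorem NP_finite : (NP u Θ n).Finite :=
  (((LF_finite u (n+1)).subset Set.diff_subset).image _)

/-- the quotient Rauzy graph -/
noncomputable def RG (Θ : List A → List A) : SimpleGraph (↥(CL u Θ n)) where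
  Adj c c' := c ≠ c' ∧ ∃ z, IsFactorOf z u ∧ z.length = n+1 ∧
    ({pc Θ n z, sc Θ z} : Set (Set (List A))) = {c.1, c'.1}
  symm := by
    constructor
    rintro c c' ⟨hne, z, h1, h2, h3⟩
    exact ⟨hne.symm, z, h1, h2, h3.trans (Set.pair_comm _ _)⟩
  loopless := by
    constructor
    rintro c ⟨hne, -⟩
    exact hne rfl

theorem vtx_mem (i : ℕ) : ({factorAt u i n, Θ (factorAt u i n)} : Set (List A)) ∈ CL u Θ n :=
  ⟨factorAt u i n, ⟨factorAt_isFactor u i n, length_factorAt u i n⟩, rfl⟩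

/-- the vertex given by position `i` -/
noncomputable def vtx (Θ : List A → List A) (i : ℕ) : ↥(CL u Θ n) :=
  ⟨{factorAt u i n, Θ (factorAt u i n)}, vtx_mem u n i⟩

theorem reach_step (Θ : List A → List A) (i : ℕ) :
    (RG u n Θ).Reachable (vtx u n Θ i) (vtx u n Θ (i+1)) := by
  by_cases h : vtx u n Θ i = vtx u n Θ (i+1)
  · rw [h]
  · apply SimpleGraph.Adj.reachable
    refine ⟨h, factorAt u i (n+1), factorAt_isFactor u i (n+1), length_factorAt u i (n+1), ?_⟩
    have h1 : pc Θ n (factorAt u i (n+1)) = (vtx u n Θ i).1 := by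
      rw [pc, factorAt_take]
      rfl
    have h2 : sc Θ (factorAt u i (n+1)) = (vtx u n Θ (i+1)).1 := by
      rw [sc, factorAt_drop_one]
      rfl
    rw [h1, h2]

theorem reach_add (Θ : List A → List A) (i d : ℕ) :
    (RG u n Θ).Reachable (vtx u n Θ i) (vtx u n Θ (i+d)) := by
  induction d with
  | zero => rfl
  | succ d ih => exact ih.trans (by rw [← Nat.add_assoc]; exact reach_step u n Θ (i+d))

theorem vtx_of_occurs (Θ : List A → List A) {w : List A} {i : ℕ} (hw : w ∈ LF u n) (hi : OccursAt u w i) :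
    vtx u n Θ i = (⟨{w, Θ w}, ⟨w, hw, rfl⟩⟩ : ↥(CL u Θ n)) := by
  apply Subtype.ext
  have : factorAt u i n = w := by
    rw [OccursAt] at hi
    rw [← hi.symm, hw.2]
  simp only [vtx, this]

theorem RG_preconnected (hrec : Recurrent u) (Θ : List A → List A) :
    (RG u n Θ).Preconnected := by
  rintro ⟨c, w, hw, rfl⟩ ⟨c', w', hw', rfl⟩
  obtain ⟨i, hi⟩ := hw.1
  obtain ⟨j, hj, hj2⟩ := hrec w' hw'.1 i
  obtain ⟨d, rfl⟩ := Nat.exists_eq_add_of_le hj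
  have e1 := vtx_of_occurs u n Θ hw hi
  have e2 := vtx_of_occurs u n Θ hw' hj2
  rw [← e1, ← e2]
  exact reach_add u n Θ i d

theorem card_CL_bound (hΘ : IsAntimorphism Θ) (hrec : Recurrent u) :
    (CL u Θ n).ncard ≤ (NP u Θ n).ncard + 1 := by
  classical
  letI : Fintype (↥(CL u Θ n)) := (CL_finite u n).fintype
  set G := RG u n Θ with hG
  set r : ↥(CL u Θ n) := vtx u n Θ 0 with hr
  have hpre : G.Preconnected := RG_preconnected u n hrec Θ
  -- predecessor function
  have key : ∀ v : ↥(CL u Θ n), v ≠ r → ∃ x, G.Adj v x ∧ G.dist r x < G.dist r v := by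
    intro v hv
    have hreach : G.Reachable r v := hpre r v
    have hdpos : 0 < G.dist r v := by
      rcases (Nat.eq_zero_or_pos (G.dist r v)).symm with h' | h'
      · exact h'
      · rcases SimpleGraph.dist_eq_zero_iff_eq_or_not_reachable.mp h' with h'' | h''
        · exact absurd h''.symm hv
        · exact absurd hreach h''
    obtain ⟨p, hp⟩ := hreach.exists_walk_length_eq_dist
    have hq := p.reverse
    cases hq' : p.reverse with
    | nil => 
      have : p.length = 0 := by
        have := congrArg SimpleGraph.Walk.length hq'
        rwa [SimpleGraph.Walk.length_reverse] at this
      omega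
    | cons h q' =>
      rename_i x
      refine ⟨x, h, ?_⟩
      have hlen : q'.length = G.dist r v - 1 := by
        have := congrArg SimpleGraph.Walk.length hq'
        rw [SimpleGraph.Walk.length_reverse] at this
        simp only [SimpleGraph.Walk.length_cons] at this
        omega
      have := SimpleGraph.dist_le q'.reverse
      rw [SimpleGraph.Walk.length_reverse, hlen] at this
      omega
  -- choose predecessor and edge word
  have key2 : ∀ v : ↥(CL u Θ n), v ≠ r → ∃ x z, G.Adj v x ∧ G.dist r x < G.dist r v ∧
      IsFactorOf z u ∧ z.length = n+1 ∧ Θ z ≠ z ∧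
      ({pc Θ n z, sc Θ z} : Set (Set (List A))) = {v.1, x.1} := by
    intro v hv
    obtain ⟨x, hadj, hdist⟩ := key v hv
    obtain ⟨hne, z, h1, h2, h3⟩ := hadj
    refine ⟨x, z, ⟨hne, z, h1, h2, h3⟩, hdist, h1, h2, ?_, h3⟩
    intro hpal
    apply hne
    apply Subtype.ext
    have hpcsc := pal_pc_eq_sc hΘ h2 hpal
    rw [hpcsc] at h3
    have h4 : ({sc Θ z} : Set (Set (List A))) = {v.1, x.1} := by
      rw [← h3, Set.pair_eq_singleton]
    have hvx : v.1 ∈ ({sc Θ z} : Set (Set (List A))) := by rw [h4]; simp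
    have hxx : x.1 ∈ ({sc Θ z} : Set (Set (List A))) := by rw [h4]; simp
    simp only [Set.mem_singleton_iff] at hvx hxx
    rw [hvx, hxx]
  -- the injection into non-palindromic classes
  set pick := fun (v : ↥(CL u Θ n)) (hv : v ≠ r) => key2 v hv with hpick
  have main : ∀ v : {v : ↥(CL u Θ n) // v ≠ r}, 
      ∃ c ∈ NP u Θ n, ∃ x : ↥(CL u Θ n), ∃ z, c = {z, Θ z} ∧ G.dist r x < G.dist r v.1 ∧
        IsFactorOf z u ∧ z.length = n+1 ∧ Θ z ≠ z ∧
        ({pc Θ n z, sc Θ z} : Set (Set (List A))) = {v.1.1, x.1} := by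
    rintro ⟨v, hv⟩
    obtain ⟨x, z, hadj, hdist, h1, h2, h3, h4⟩ := key2 v hv
    exact ⟨{z, Θ z}, ⟨z, ⟨⟨h1, h2⟩, fun hmem => h3 hmem.2.2⟩, rfl⟩, x, z, rfl, hdist, h1, h2, h3, h4⟩
  choose F hF hx hz hFz hdlt hzf hzl hznp hzpair using main
  have hinj : Function.Injective (fun v => (⟨F v, hF v⟩ : ↥(NP u Θ n))) := by
    rintro v v' heq
    simp only [Subtype.mk_eq_mk] at heq
    by_contra hne
    -- same edge-word class implies same endpoint pair
    have hzz : ({pc Θ n (hz v), sc Θ (hz v)} : Set (Set (List A))) =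
        ({pc Θ n (hz v'), sc Θ (hz v')} : Set (Set (List A))) := by
      have hmem : hz v' ∈ ({hz v, Θ (hz v)} : Set (List A)) := by
        have h1 : hz v' ∈ ({hz v', Θ (hz v')} : Set (List A)) := by simp
        rw [← hFz v', ← heq, hFz v] at h1
        exact h1
      rcases hmem with h | h
      · rw [h]
      · simp only [Set.mem_singleton_iff] at h
        rw [h]
        obtain ⟨e1, e2⟩ := pc_theta hΘ (hzl v)
        rw [e1, e2]
        exact (Set.pair_comm _ _)
    have hpair : ({v.1.1, (hx v).1} : Set (Set (List A))) = {v'.1.1, (hx v').1} := by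
      rw [← hzpair v, hzz, hzpair v']
    rcases Set.pair_eq_pair_iff.mp hpair with ⟨ha, hb⟩ | ⟨ha, hb⟩
    · exact hne (Subtype.ext (Subtype.ext ha))
    · -- v.1 = hx v' and hx v = v'.1 : distance contradiction
      have e1 : v.1.1 = (hx v').1 := ha
      have e2 : (hx v).1 = v'.1.1 := hb
      have d1 := hdlt v
      have d2 := hdlt v'
      have e1' : v.1 = hx v' := Subtype.ext e1
      have e2' : hx v = v'.1 := Subtype.ext e2
      rw [← e1'] at d2
      rw [e2'] at d1
      omega
  have hcard1 : Nat.card {v : ↥(CL u Θ n) // v ≠ r} ≤ Nat.card (↥(NP u Θ n)) := by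
    haveI : Finite (↥(NP u Θ n)) := (NP_finite u n).to_subtype
    exact Nat.card_le_card_of_injective _ hinj
  have hcard2 : Nat.card {v : ↥(CL u Θ n) // v ≠ r} = (CL u Θ n).ncard - 1 := by
    rw [Nat.card_eq_fintype_card]
    show Fintype.card {v : ↥(CL u Θ n) // ¬ (v = r)} = _
    rw [Fintype.card_subtype_compl, Fintype.card_subtype_eq]
    congr 1
    rw [← Nat.card_eq_fintype_card, Nat.card_coe_set_eq]
  have hcard3 : Nat.card (↥(NP u Θ n)) = (NP u Θ n).ncard := Nat.card_coe_set_eq _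
  have hCLpos : 0 < (CL u Θ n).ncard :=
    (Set.ncard_pos (CL_finite u n)).mpr ⟨r.1, r.2⟩
  omega

/-- Inequality (I): `T(n) ≥ 0`. -/
theorem T_nonneg (hΘ : IsAntimorphism Θ) (hrec : Recurrent u)
    (hclo : ∀ w, IsFactorOf w u → IsFactorOf (Θ w) u) :
    complexity u n + palComplexity Θ u n + palComplexity Θ u (n+1) ≤ complexity u (n+1) + 2 := by
  have hCc : ∀ m, complexity u m = (LF u m).ncard := fun m => rfl
  have hPp : ∀ m, palComplexity Θ u m = (PF u Θ m).ncard := fun m => rfl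
  have hstab : ∀ m, ∀ x ∈ LF u m, Θ x ∈ LF u m := by
    intro m x hx
    exact ⟨hclo x hx.1, by rw [theta_length hΘ, hx.2]⟩
  have hinv : ∀ (m : ℕ), ∀ x ∈ LF u m, Θ (Θ x) = x := fun m x _ => hΘ.2 x
  -- orbit count on LF n
  have OC1 := orbit_count Θ (LF u n).ncard (LF u n) rfl (LF_finite u n) (hstab n) (hinv n)
  have hfix1 : {x | x ∈ LF u n ∧ Θ x = x} = PF u Θ n := by
    ext x
    simp only [Set.mem_setOf_eq, LF, PF]
    tauto
  rw [hfix1] at OC1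
  -- orbit count on the non-palindromic part of LF (n+1)
  set S₂ := LF u (n+1) \ PF u Θ (n+1) with hS₂
  have hstab2 : ∀ x ∈ S₂, Θ x ∈ S₂ := by
    rintro x ⟨hx, hnx⟩
    refine ⟨hstab (n+1) x hx, ?_⟩
    rintro ⟨-, -, hpal⟩
    apply hnx
    refine ⟨hx.1, hx.2, ?_⟩
    have := congrArg Θ hpal
    rwa [hΘ.2, hΘ.2] at this
  have OC2 := orbit_count Θ S₂.ncard S₂ rfl ((LF_finite u (n+1)).subset Set.diff_subset)
    hstab2 (fun x _ => hΘ.2 x)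
  have hfix2 : {x | x ∈ S₂ ∧ Θ x = x} = (∅ : Set (List A)) := by
    ext x
    simp only [Set.mem_setOf_eq, Set.mem_empty_iff_false, iff_false, not_and]
    rintro ⟨hx, hnx⟩ hpal
    exact hnx ⟨hx.1, hx.2, hpal⟩
  rw [hfix2] at OC2
  simp only [Set.ncard_empty, add_zero] at OC2
  have hdiff : S₂.ncard + (PF u Θ (n+1)).ncard = (LF u (n+1)).ncard :=
    Set.ncard_diff_add_ncard_of_subset (PF_subset u (n+1)) (LF_finite u (n+1))
  have hbound := card_CL_bound u n hΘ hrec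
  have eCL : 2 * (CL u Θ n).ncard = (LF u n).ncard + (PF u Θ n).ncard := OC1
  have eNP : 2 * (NP u Θ n).ncard = S₂.ncard := OC2
  rw [hCc n, hCc (n+1), hPp n, hPp (n+1)]
  omega

end CoreGraph

end Graph
section PartE
variable (u : ℕ → A)

theorem ends_length_le {w : List A} {m : ℕ} (h : Ends u w m) : w.length ≤ m := by
  have := h.length_le
  rwa [length_pref] at this

/-- `fe` is injective on factors of a fixed length -/
theorem fe_injOn {w w' : List A} (hw : IsFactorOf w u) (hw' : IsFactorOf w' u)
    (hl : w.length = w'.length) (hfe : fe u w = fe u w') : w = w' := by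
  obtain ⟨m, hm⟩ := (isFactor_iff_ends u w).1 hw
  obtain ⟨m', hm'⟩ := (isFactor_iff_ends u w').1 hw'
  have e1 := ends_fe u hm
  have e2 := ends_fe u hm'
  rw [hfe] at e1
  exact suffix_eq_of_length e1 e2 hl

/-- palindromic factors of length between 1 and K -/
def PalsLe (Θ : List A → List A) (K : ℕ) : Set (List A) :=
  {q : List A | IsFactorOf q u ∧ Θ q = q ∧ 1 ≤ q.length ∧ q.length ≤ K}

theorem PalsLe_finite [Fintype A] (K : ℕ) : (PalsLe u Θ K).Finite := by
  have : PalsLe u Θ K ⊆ {l : List A | l.length ≤ K} := fun q hq => hq.2.2.2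
  exact (List.finite_length_le A K).subset this

theorem PalsLe_succ [Fintype A] (K : ℕ) :
    (PalsLe u Θ (K+1)).ncard = (PalsLe u Θ K).ncard + palComplexity Θ u (K+1) := by
  have hunion : PalsLe u Θ (K+1) = PalsLe u Θ K ∪ PF u Θ (K+1) := by
    ext q
    simp only [PalsLe, PF, Set.mem_setOf_eq, Set.mem_union]
    constructor
    · rintro ⟨h1, h2, h3, h4⟩
      rcases Nat.lt_or_ge q.length (K+1) with h | h
      · exact Or.inl ⟨h1, h2, h3, by omega⟩
      · exact Or.inr ⟨h1, by omega, h2⟩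
    · rintro (⟨h1, h2, h3, h4⟩ | ⟨h1, h2, h3⟩)
      · exact ⟨h1, h2, h3, by omega⟩
      · exact ⟨h1, h3, by omega, by omega⟩
  have hdisj : Disjoint (PalsLe u Θ K) (PF u Θ (K+1)) := by
    rw [Set.disjoint_left]
    rintro q ⟨-, -, -, h4⟩ ⟨-, h2, -⟩
    omega
  rw [hunion, Set.ncard_union_eq hdisj (PalsLe_finite u K) ((LF_finite u (K+1)).subset (PF_subset u (K+1)))]
  rfl

/-- The central counting bound (♦). -/
theorem diamond [Fintype A] (hΘ : IsAntimorphism Θ) (hrec : Recurrent u)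
    (hclo : ∀ w, IsFactorOf w u → IsFactorOf (Θ w) u)
    {N₀ : ℕ} (hN₀ : ∀ m, N₀ < m → Good u Θ m) (N : ℕ) :
    2*N + complexity u (N+1) ≤
      2 * (PalsLe u Θ N).ncard + 2*N₀ + 2 + palComplexity Θ u (N+1) := by
  classical
  -- the sets
  set FCN : Set ℕ := fe u '' (LF u (N+1)) with hFCN
  set AA : Set ℕ := Set.Ico 1 (N+1) ∪ FCN with hAA
  set BB : Set ℕ := {m ∈ AA | ∃ q : List A, q ≠ [] ∧ Θ q = q ∧ Ends u q m ∧ fe u q = m ∧ q.length ≤ N} with hBB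
  have hFCNfin : FCN.Finite := (LF_finite u (N+1)).image _
  have hAAfin : AA.Finite := (Set.finite_Ico 1 (N+1)).union hFCNfin
  -- #AA = N + C(N+1)
  have hinj : Set.InjOn (fe u) (LF u (N+1)) := by
    intro w hw w' hw' hfe
    exact fe_injOn u hw.1 hw'.1 (by rw [hw.2, hw'.2]) hfe
  have hFCNcard : FCN.ncard = complexity u (N+1) := by
    rw [hFCN, Set.ncard_image_of_injOn hinj]
    rfl
  have hFCNge : ∀ m ∈ FCN, N+1 ≤ m := by
    rintro m ⟨w, hw, rfl⟩
    obtain ⟨m', hm'⟩ := (isFactor_iff_ends u w).1 hw.1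
    have h1 := length_le_fe u hm'
    have h2 := hw.2
    omega
  have hdisj : Disjoint (Set.Ico 1 (N+1)) FCN := by
    rw [Set.disjoint_left]
    rintro m hm hm2
    have := hFCNge m hm2
    simp only [Set.mem_Ico] at hm
    omega
  have hAAcard : AA.ncard = N + complexity u (N+1) := by
    rw [hAA, Set.ncard_union_eq hdisj (Set.finite_Ico 1 (N+1)) hFCNfin, hFCNcard]
    congr 1
    rw [← Finset.coe_Ico, Set.ncard_coe_finset, Nat.card_Ico]
    omega
  -- #BB ≤ #PalsLe N
  have hBBsub : BB ⊆ AA := fun m hm => hm.1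
  have hBBfin : BB.Finite := hAAfin.subset hBBsub
  set pickq : ℕ → List A := fun m =>
    if h : ∃ q : List A, q ≠ [] ∧ Θ q = q ∧ Ends u q m ∧ fe u q = m ∧ q.length ≤ N
    then h.choose else [] with hpickq
  have hpick : ∀ m ∈ BB, (pickq m ≠ [] ∧ Θ (pickq m) = pickq m ∧ Ends u (pickq m) m ∧
      fe u (pickq m) = m ∧ (pickq m).length ≤ N) := by
    rintro m ⟨-, hex⟩
    rw [hpickq]
    simp only [hex, dif_pos]
    exact hex.choose_spec
  have hBBcard : BB.ncard ≤ (PalsLe u Θ N).ncard := by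
    have hmaps : ∀ m ∈ BB, pickq m ∈ PalsLe u Θ N := by
      intro m hm
      obtain ⟨h1, h2, h3, h4, h5⟩ := hpick m hm
      refine ⟨factor_of_ends u h3, h2, ?_, h5⟩
      cases hq : pickq m with
      | nil => exact absurd hq h1
      | cons a t => simp [hq]
    have hinjq : Set.InjOn pickq BB := by
      intro m hm m' hm' heq
      have e1 := (hpick m hm).2.2.2.1
      have e2 := (hpick m' hm').2.2.2.1
      rw [← e1, ← e2, heq]
    exact Set.ncard_le_ncard_of_injOn pickq hmaps hinjq (PalsLe_finite u N)
  -- A \ B is small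
  set TT : Set (List A) := {w ∈ LF u (N+1) | fe u (Θ w) < fe u w} with hTT
  have hsubAB : AA \ BB ⊆ Set.Icc 0 N₀ ∪ (fe u '' PF u Θ (N+1)) ∪ (fe u '' TT) := by
    rintro m ⟨hmA, hmB⟩
    rcases Nat.lt_or_ge N₀ m with hm | hm
    swap
    · exact Or.inl (Or.inl (by simp; omega))
    obtain ⟨q, hqne, hqpal, hqE, hqfe⟩ := hN₀ m hm
    have hqlen : N + 1 ≤ q.length := by
      by_contra hlt
      push_neg at hlt
      exact hmB ⟨hmA, q, hqne, hqpal, hqE, hqfe, by omega⟩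
    have hmFCN : m ∈ FCN := by
      rcases hmA with h | h
      · exfalso
        simp only [Set.mem_Ico] at h
        have := ends_length_le u hqE
        omega
      · exact h
    obtain ⟨w, hwLF, hwfe⟩ := hmFCN
    have hwE : Ends u w m := by
      obtain ⟨m', hm'⟩ := (isFactor_iff_ends u w).1 hwLF.1
      rw [← hwfe]
      exact ends_fe u hm'
    rcases Nat.eq_or_lt_of_le hqlen with heq | hlt
    · -- q = w is a palindrome of length N+1
      have hqw : q = w := suffix_eq_of_length hqE hwE (by rw [hwLF.2, ← heq])
      refine Or.inl (Or.inr ⟨q, ⟨factor_of_ends u hqE, by omega, hqpal⟩, by rw [hqfe]⟩)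
    · -- w ∈ TT
      have hwq : w <:+ q := suffix_suffix_of_le hwE hqE (by rw [hwLF.2]; omega)
      have hpre : Θ w <+: q := by
        have := theta_suffix_prefix hΘ hwq
        rwa [hqpal] at this
      have hEθ : Ends u (Θ w) (m - q.length + (Θ w).length) := ends_take u hpre hqE
      have hlenθ : (Θ w).length = N + 1 := by rw [theta_length hΘ, hwLF.2]
      have hqm : q.length ≤ m := ends_length_le u hqE
      have hfeθ : fe u (Θ w) < m := by
        have := fe_le u hEθ
        omega
      refine Or.inr ⟨w, ⟨hwLF, ?_⟩, hwfe⟩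
      rw [hwfe]
      exact hfeθ
  -- cardinalities of the three pieces
  have hZ2 : (fe u '' PF u Θ (N+1)).ncard ≤ palComplexity Θ u (N+1) := by
    have := Set.ncard_image_le (s := PF u Θ (N+1)) (f := fe u)
      ((LF_finite u (N+1)).subset (PF_subset u (N+1)))
    exact this
  have hTTfin : TT.Finite := (LF_finite u (N+1)).subset (fun w hw => hw.1)
  have hZ3 : (fe u '' TT).ncard ≤ TT.ncard := Set.ncard_image_le hTTfin
  have hABcard : (AA \ BB).ncard ≤ (N₀ + 1) + palComplexity Θ u (N+1) + TT.ncard := by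
    calc (AA \ BB).ncard ≤ (Set.Icc 0 N₀ ∪ (fe u '' PF u Θ (N+1)) ∪ (fe u '' TT)).ncard :=
          Set.ncard_le_ncard hsubAB
            (((Set.finite_Icc 0 N₀).union (((LF_finite u (N+1)).subset (PF_subset u (N+1))).image _)).union
            (hTTfin.image _))
      _ ≤ (Set.Icc 0 N₀ ∪ (fe u '' PF u Θ (N+1))).ncard + (fe u '' TT).ncard := Set.ncard_union_le _ _
      _ ≤ (Set.Icc 0 N₀).ncard + (fe u '' PF u Θ (N+1)).ncard + (fe u '' TT).ncard := by
          have := Set.ncard_union_le (Set.Icc 0 N₀) (fe u '' PF u Θ (N+1))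
          omega
      _ ≤ (N₀ + 1) + palComplexity Θ u (N+1) + TT.ncard := by
          have h0 : (Set.Icc 0 N₀).ncard = N₀ + 1 := by
            rw [← Finset.coe_Icc, Set.ncard_coe_finset, Nat.card_Icc]
            omega
          omega
  -- the pairing bound : 2 #TT + P(N+1) ≤ C(N+1)
  have hpairing : 2 * TT.ncard + palComplexity Θ u (N+1) ≤ complexity u (N+1) := by
    set S₂ : Set (List A) := LF u (N+1) \ PF u Θ (N+1) with hS₂
    have hS₂fin : S₂.Finite := (LF_finite u (N+1)).subset Set.diff_subset
    have hTTsub : TT ⊆ S₂ := by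
      rintro w ⟨hw, hfe⟩
      refine ⟨hw, ?_⟩
      rintro ⟨-, -, hpal⟩
      rw [hpal] at hfe
      omega
    have hθTTsub : Θ '' TT ⊆ S₂ := by
      rintro x ⟨w, ⟨hw, hfe⟩, rfl⟩
      refine ⟨⟨hclo w hw.1, by rw [theta_length hΘ, hw.2]⟩, ?_⟩
      rintro ⟨-, -, hpal⟩
      rw [hΘ.2] at hpal
      rw [← hpal] at hfe
      omega
    have hdisjT : Disjoint TT (Θ '' TT) := by
      rw [Set.disjoint_left]
      rintro x ⟨hx, hfex⟩ ⟨w, ⟨hw, hfew⟩, rfl⟩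
      rw [hΘ.2] at hfex
      omega
    have hcardθ : (Θ '' TT).ncard = TT.ncard := Set.ncard_image_of_injOn ((theta_inj hΘ).injOn)
    have hun : (TT ∪ Θ '' TT).ncard = 2 * TT.ncard := by
      rw [Set.ncard_union_eq hdisjT hTTfin (hTTfin.image _), hcardθ]
      omega
    have hle : (TT ∪ Θ '' TT).ncard ≤ S₂.ncard :=
      Set.ncard_le_ncard (Set.union_subset hTTsub hθTTsub) hS₂fin
    have hsplit : S₂.ncard + palComplexity Θ u (N+1) = complexity u (N+1) := by
      have h := Set.ncard_diff_add_ncard_of_subset (PF_subset u (N+1) (Θ := Θ)) (LF_finite u (N+1))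
      exact h
    omega
  -- put everything together
  have hAB : AA.ncard ≤ BB.ncard + (AA \ BB).ncard := by
    calc AA.ncard = (BB ∪ (AA \ BB)).ncard := by rw [Set.union_diff_cancel hBBsub]
      _ ≤ BB.ncard + (AA \ BB).ncard := Set.ncard_union_le _ _
  rw [hAAcard] at hAB
  omega

/-- Final assembly. -/
theorem main_final [Fintype A] (hΘ : IsAntimorphism Θ) (hrec : Recurrent u)
    (hclo : ∀ w, IsFactorOf w u → IsFactorOf (Θ w) u)
    {N₀ : ℕ} (hN₀1 : 1 ≤ N₀) (hN₀ : ∀ m, N₀ < m → Good u Θ m) :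
    ∃ H : ℕ, 0 < H ∧ ∀ n : ℕ, H < n →
      (complexity u (n + 1) : ℤ) - complexity u n + 2 =
        palComplexity Θ u n + palComplexity Θ u (n + 1) := by
  classical
  set T : ℕ → ℤ := fun n => (complexity u (n+1) : ℤ) + 2 - complexity u n
    - palComplexity Θ u n - palComplexity Θ u (n+1) with hT
  have hTpos : ∀ n, 0 ≤ T n := by
    intro n
    have := T_nonneg u n hΘ hrec hclo
    simp only [hT]
    push_cast
    omega
  set a := N₀ + 1 with ha
  -- closed form for the partial sums
  have hId : ∀ N, a ≤ N → ∑ n ∈ Finset.Icc a N, T n =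
      (complexity u (N+1) : ℤ) - complexity u a + 2*((N:ℤ) - a + 1)
      - 2*(((PalsLe u Θ N).ncard : ℤ) - ((PalsLe u Θ N₀).ncard : ℤ))
      + palComplexity Θ u a - palComplexity Θ u (N+1) := by
    intro N hN
    induction N, hN using Nat.le_induction with
    | base =>
      rw [Finset.Icc_self, Finset.sum_singleton]
      have hps : (PalsLe u Θ a).ncard = (PalsLe u Θ N₀).ncard + palComplexity Θ u a := by
        rw [ha]
        exact PalsLe_succ u N₀
      simp only [hT]
      rw [hps]
      push_cast
      ring
    | succ N hN ih =>
      rw [Finset.sum_Icc_succ_top (by omega), ih]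
      have hps : (PalsLe u Θ (N+1)).ncard = (PalsLe u Θ N).ncard + palComplexity Θ u (N+1) :=
        PalsLe_succ u N
      simp only [hT]
      rw [hps]
      push_cast
      ring
  -- the partial sums are bounded
  set K : ℤ := 2*((PalsLe u Θ N₀).ncard : ℤ) + (palComplexity Θ u a : ℤ) + 2*(N₀ : ℤ) + 4
    - (complexity u a : ℤ) - 2*(a:ℤ) with hK
  have hbound : ∀ N, a ≤ N → ∑ n ∈ Finset.Icc a N, T n ≤ K := by
    intro N hN
    have hd := diamond u hΘ hrec hclo hN₀ N
    rw [hId N hN]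
    have hd' : 2*(N:ℤ) + (complexity u (N+1) : ℤ) ≤
        2 * ((PalsLe u Θ N).ncard : ℤ) + 2*(N₀:ℤ) + 2 + (palComplexity Θ u (N+1) : ℤ) := by
      push_cast
      exact_mod_cast hd
    rw [hK]
    omega
  -- the set of levels with nonzero T is finite
  have hZfin : {n : ℕ | a ≤ n ∧ T n ≠ 0}.Finite := by
    rw [← Set.not_infinite]
    intro hinf
    have hKnn : 0 ≤ K := le_trans (Finset.sum_nonneg (fun n _ => hTpos n)) (hbound a le_rfl)
    obtain ⟨S, hS, hcard⟩ := Set.Infinite.exists_subset_card_eq hinf (K.toNat + 1)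
    have hSne : S.Nonempty := by
      rw [← Finset.card_pos, hcard]; omega
    set M := S.max' hSne with hM
    have hMa : a ≤ M := (hS (S.max'_mem hSne)).1
    have hsub : S ⊆ Finset.Icc a M := by
      intro n hn
      simp only [Finset.mem_Icc]
      exact ⟨(hS hn).1, S.le_max' n hn⟩
    have h1 : (S.card : ℤ) ≤ ∑ n ∈ S, T n := by
      have : ∀ n ∈ S, (1:ℤ) ≤ T n := by
        intro n hn
        have := (hS hn).2
        have := hTpos n
        omega
      calc (S.card : ℤ) = ∑ _n ∈ S, (1:ℤ) := by simp
        _ ≤ ∑ n ∈ S, T n := Finset.sum_le_sum this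
    have h2 : ∑ n ∈ S, T n ≤ ∑ n ∈ Finset.Icc a M, T n :=
      Finset.sum_le_sum_of_subset_of_nonneg hsub (fun n _ _ => hTpos n)
    have h3 := hbound M hMa
    rw [hcard] at h1
    omega
  -- conclude
  set H := hZfin.toFinset.sup id + a with hH
  refine ⟨H, by omega, fun n hn => ?_⟩
  have hna : a ≤ n := by omega
  have hnZ : n ∉ {n : ℕ | a ≤ n ∧ T n ≠ 0} := by
    intro hmem
    have : n ≤ hZfin.toFinset.sup id :=
      Finset.le_sup (f := id) (by rwa [Set.Finite.mem_toFinset])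
    omega
  have hT0 : T n = 0 := by
    by_contra h
    exact hnZ ⟨hna, h⟩
  simp only [hT] at hT0
  omega

end PartE

end PalProof

/-- **Proposition 6, item 4.** For a recurrent word with finite `Θ`-defect there
is a positive integer `H` with `C(n+1) - C(n) + 2 = P_Θ(n) + P_Θ(n+1)` for all
`n > H` (i.e. `T_Θ(n) = 0` for all `n > H`). -/
theorem complexity_equality_of_finite_defect
    {A : Type*} [Fintype A] (Θ : List A → List A) (hΘ : IsAntimorphism Θ)
    (u : ℕ → A) (hrec : Recurrent u) (hdef : FiniteDefect Θ u) :
    ∃ H : ℕ, 0 < H ∧ ∀ n : ℕ, H < n →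
      (complexity u (n + 1) : ℤ) - complexity u n + 2 =
        palComplexity Θ u n + palComplexity Θ u (n + 1) := by
  classical
  obtain ⟨N₀, hN₀1, hgood⟩ := PalProof.exists_good_bound u hΘ hdef
  have hclo : ∀ w, IsFactorOf w u → IsFactorOf (Θ w) u :=
    fun w hw => PalProof.closure u hΘ hrec hgood hw
  exact PalProof.main_final u hΘ hrec hclo hN₀1 hgood
end

section
/- Let Θ : A* → A* be an involutive antimorphism over a finite alphabet A. Then for every finite word w ∈ A*, the number of distinct Θ-palindromic factors of w satisfies #Pal_Θ(w) ≤ |w| + 1 − γ_Θ(w), where γ_Θ(w) = #{ {a, Θ(a)} : a is a letter occurring in w with a ≠ Θ(a) }. -/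
section PalAux

variable {A : Type*} {Θ : List A → List A}

lemma antimorph_nil (hΘ : IsAntimorphism Θ) : Θ ([] : List A) = [] := by
  have h := hΘ.1 [] []
  simp only [List.append_nil] at h
  have h2 := congrArg List.length h
  simp only [List.length_append] at h2
  exact List.length_eq_zero_iff.mp (by omega)

lemma antimorph_ne_nil (hΘ : IsAntimorphism Θ) {x : List A} (hx : x ≠ []) : Θ x ≠ [] := by
  intro h
  exact hx (by rw [← hΘ.2 x, h, antimorph_nil hΘ])

lemma antimorph_single (hΘ : IsAntimorphism Θ) (a : A) : ∃ b, Θ [a] = [b] := by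
  cases h : Θ [a] with
  | nil => exact absurd h (antimorph_ne_nil hΘ (by simp))
  | cons b t =>
    cases t with
    | nil => exact ⟨b, rfl⟩
    | cons c t' =>
      exfalso
      have h2 : Θ (Θ [a]) = [a] := hΘ.2 [a]
      rw [h] at h2
      have h3 : Θ (b :: c :: t') = Θ (c :: t') ++ Θ [b] := by
        have := hΘ.1 [b] (c :: t')
        simpa using this
      rw [h3] at h2
      have l1 : Θ (c :: t') ≠ [] := antimorph_ne_nil hΘ (by simp)
      have l2 : Θ [b] ≠ [] := antimorph_ne_nil hΘ (by simp)
      have h4 := congrArg List.length h2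
      simp only [List.length_append, List.length_cons, List.length_nil] at h4
      have p1 : 0 < (Θ (c :: t')).length := List.length_pos_iff.mpr l1
      have p2 : 0 < (Θ [b]).length := List.length_pos_iff.mpr l2
      omega

lemma pal_suffix_prefix (hΘ : IsAntimorphism Θ) {p q : List A}
    (hp : Θ p = p) (hq : Θ q = q) (h : p <:+ q) : p <+: q := by
  obtain ⟨s, rfl⟩ := h
  have h2 := hΘ.1 s p
  rw [hp, hq] at h2
  exact ⟨Θ s, h2.symm⟩

end PalAux

/-- **Inequality (1).** For any involutive antimorphism `Θ` and any finite word
`w`, the number of `Θ`-palindromic factors satisfies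
`#Pal_Θ(w) ≤ |w| + 1 - γ_Θ(w)`. -/
theorem palSet_ncard_le
    {A : Type*} [Fintype A] (Θ : List A → List A) (hΘ : IsAntimorphism Θ)
    (w : List A) :
    ((palSet Θ w).ncard : ℤ) ≤ (w.length : ℤ) + 1 - gammaTheta Θ w := by
  classical
  choose θ hθ using antimorph_single hΘ
  have hθθ : ∀ a, θ (θ a) = a := by
    intro a
    have h := hΘ.2 [a]
    rw [hθ a, hθ (θ a)] at h
    simpa using h
  set n := w.length with hn
  set Γ : Set (Set A) :=
    {P | ∃ a, a ∈ w ∧ Θ [a] ≠ [a] ∧ P = {b | [b] = [a] ∨ [b] = Θ [a]}} with hΓdef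
  have hγ : gammaTheta Θ w = Γ.ncard := rfl
  have hΓchar : ∀ P ∈ Γ, ∃ a, a ∈ w ∧ θ a ≠ a ∧ P = {b | b = a ∨ b = θ a} := by
    rintro P ⟨a, ha, hne, rfl⟩
    refine ⟨a, ha, fun h => hne (by rw [hθ a, h]), ?_⟩
    ext b
    simp [hθ a]
  have hpair : ∀ a c : A, θ a ≠ a → (c = a ∨ c = θ a) →
      θ c ≠ c ∧ ∀ b, (b = a ∨ b = θ a) ↔ (b = c ∨ b = θ c) := by
    intro a c hne hc
    rcases hc with rfl | rfl
    · exact ⟨hne, fun b => Iff.rfl⟩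
    · refine ⟨?_, ?_⟩
      · rw [hθθ a]; intro h; exact hne h.symm
      · intro b; rw [hθθ a]; tauto
  -- existence of an end position for every palindromic factor
  have hexf : ∀ p ∈ palSet Θ w, ∃ i, i ≤ n ∧ p <:+ w.take i := by
    rintro p ⟨hinf, -⟩
    obtain ⟨s, t, hst⟩ := hinf
    refine ⟨s.length + p.length, ?_, ⟨s, ?_⟩⟩
    · have := congrArg List.length hst
      simp only [List.length_append] at this
      omega
    · rw [← hst, List.take_left' (by simp)]
  set f : List A → ℕ := fun p => if h : ∃ i, p <:+ w.take i then Nat.find h else 0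
    with hfdef
  have hf1 : ∀ p ∈ palSet Θ w, p <:+ w.take (f p) := by
    intro p hp
    obtain ⟨i, -, hsuf⟩ := hexf p hp
    have h : ∃ i, p <:+ w.take i := ⟨i, hsuf⟩
    simp only [hfdef, dif_pos h]
    exact Nat.find_spec h
  have hf2 : ∀ p ∈ palSet Θ w, ∀ j, p <:+ w.take j → f p ≤ j := by
    intro p hp j hj
    have h : ∃ i, p <:+ w.take i := ⟨j, hj⟩
    simp only [hfdef, dif_pos h]
    exact Nat.find_le hj
  have hf3 : ∀ p ∈ palSet Θ w, f p ≤ n := by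
    intro p hp
    obtain ⟨i, hi, hs⟩ := hexf p hp
    exact le_trans (hf2 p hp i hs) hi
  have hfnil : f [] = 0 := by
    have h : ∃ i, ([] : List A) <:+ w.take i := ⟨0, List.nil_suffix⟩
    simp only [hfdef, dif_pos h]
    exact (Nat.find_eq_zero h).2 List.nil_suffix
  -- injectivity of f on palSet
  have main : ∀ p ∈ palSet Θ w, ∀ q ∈ palSet Θ w, p <:+ q → p ≠ q → f p ≠ f q := by
    intro p hp q hq hsub hne heq
    obtain ⟨t, ht⟩ := pal_suffix_prefix hΘ hp.2 hq.2 hsub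
    have htne : t ≠ [] := by
      rintro rfl
      rw [List.append_nil] at ht
      exact hne ht
    obtain ⟨s, hs⟩ := hf1 q hq
    have hlt : s.length + p.length < f q := by
      have h1 : (w.take (f q)).length ≤ f q := by
        simp [List.length_take]
      have h2 := congrArg List.length hs
      have h3 := congrArg List.length ht
      simp only [List.length_append] at h2 h3
      have h4 : 0 < t.length := List.length_pos_iff.mpr htne
      omega
    have e1 : (w.take (f q)).take (s.length + p.length) = s ++ p := by
      rw [← hs, ← ht, ← List.append_assoc]
      exact List.take_left' (by simp)
    have e2 : (w.take (f q)).take (s.length + p.length) = w.take (s.length + p.length) := by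
      rw [List.take_take, inf_eq_left.mpr hlt.le]
    have hsuffix : p <:+ w.take (s.length + p.length) :=
      ⟨s, by rw [← e2]; exact e1.symm⟩
    have := hf2 p hp _ hsuffix
    omega
  have hfinj : Set.InjOn f (palSet Θ w) := by
    intro p hp q hq heq
    by_contra hne
    have hps := hf1 p hp
    have hqs := hf1 q hq
    rw [heq] at hps
    rcases List.suffix_or_suffix_of_suffix hps hqs with h | h
    · exact main p hp q hq h hne heq
    · exact main q hq p hp h (Ne.symm hne) heq.symm
  -- the map g on pair classes
  set g : Set A → ℕ :=
    fun P => if h : ∃ j, ∃ hj : j < w.length, w[j]'hj ∈ P then Nat.find h + 1 else 0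
    with hgdef
  have hexg : ∀ P ∈ Γ, ∃ j, ∃ hj : j < w.length, w[j]'hj ∈ P := by
    intro P hP
    obtain ⟨a, ha, -, hPeq⟩ := hΓchar P hP
    obtain ⟨j, hj, hja⟩ := List.mem_iff_getElem.mp ha
    exact ⟨j, hj, by rw [hPeq]; exact Or.inl hja⟩
  have hg1 : ∀ P ∈ Γ, ∃ j, g P = j + 1 ∧ ∃ hj : j < w.length,
      (w[j]'hj ∈ P) ∧ ∀ j' < j, ∀ hj' : j' < w.length, w[j']'hj' ∉ P := by
    intro P hP
    have h := hexg P hP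
    refine ⟨Nat.find h, ?_, ?_⟩
    · simp only [hgdef, dif_pos h]
    · obtain ⟨hj, hmem⟩ := Nat.find_spec h
      exact ⟨hj, hmem, fun j' hj' hlen hmem' => Nat.find_min h hj' ⟨hlen, hmem'⟩⟩
  have hgn : ∀ P ∈ Γ, g P ≤ n := by
    intro P hP
    obtain ⟨j, hgP, hj, -⟩ := hg1 P hP
    omega
  have hginj : Set.InjOn g Γ := by
    intro P hP Q hQ heq
    obtain ⟨j, hgP, hj, hmemP, -⟩ := hg1 P hP
    obtain ⟨j', hgQ, hj', hmemQ, -⟩ := hg1 Q hQ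
    have hjj : j = j' := by omega
    subst hjj
    obtain ⟨a, -, hnea, hPeq⟩ := hΓchar P hP
    obtain ⟨a', -, hnea', hQeq⟩ := hΓchar Q hQ
    have hcP : w[j]'hj = a ∨ w[j]'hj = θ a := by rw [hPeq] at hmemP; exact hmemP
    have hcQ : w[j]'hj = a' ∨ w[j]'hj = θ a' := by rw [hQeq] at hmemQ; exact hmemQ
    have e1 := (hpair a _ hnea hcP).2
    have e2 := (hpair a' _ hnea' hcQ).2
    rw [hPeq, hQeq]
    ext b
    rw [Set.mem_setOf_eq, Set.mem_setOf_eq, e1 b, ← e2 b]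
  -- disjointness of the two images
  have hdisj : ∀ p ∈ palSet Θ w, ∀ P ∈ Γ, f p ≠ g P := by
    intro p hp P hP heq
    obtain ⟨j, hgP, hj, hmemP, hmin⟩ := hg1 P hP
    have hpne : p ≠ [] := by
      rintro rfl
      rw [hfnil] at heq
      omega
    have hppos : 0 < p.length := List.length_pos_iff.mpr hpne
    have hps : p <:+ w.take (j + 1) := by
      rw [← hgP, ← heq]
      exact hf1 p hp
    obtain ⟨s, hs⟩ := hps
    have hlen : s.length + p.length = j + 1 := by
      have := congrArg List.length hs
      simp only [List.length_append, List.length_take] at this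
      omega
    -- the letters of p at both ends
    set c := p.getLast hpne with hcdef
    have hclast : c = p[p.length - 1]'(by omega) := List.getLast_eq_getElem hpne
    have hcw : c = w[j]'hj := by
      have h1 : (s ++ p)[j]'(by rw [hs]; simp [List.length_take]; omega)
          = p[j - s.length]'(by omega) :=
        List.getElem_append_right (by omega)
      have h2 : (s ++ p)[j]'(by rw [hs]; simp [List.length_take]; omega)
          = (w.take (j + 1))[j]'(by simp [List.length_take]; omega) :=
        List.getElem_of_eq hs _
      have h3 : (w.take (j + 1))[j]'(by simp [List.length_take]; omega) = w[j]'hj :=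
        List.getElem_take
      rw [hclast]
      have : j - s.length = p.length - 1 := by omega
      rw [← h3, ← h2, h1]
      congr 1
      omega
    -- first letter of p is θ c
    have hhead : ∃ r, p = θ c :: r := by
      have hdp : p.dropLast ++ [c] = p := List.dropLast_append_getLast hpne
      have := hΘ.1 p.dropLast [c]
      rw [hdp, hp.2, hθ c] at this
      exact ⟨Θ p.dropLast, this⟩
    obtain ⟨r, hr⟩ := hhead
    -- c is in the pair class and θ c ≠ c
    obtain ⟨a, -, hnea, hPeq⟩ := hΓchar P hP
    have hcP : c = a ∨ c = θ a := by rw [hPeq] at hmemP; rw [hcw]; exact hmemP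
    obtain ⟨hθc, hPc⟩ := hpair a c hnea hcP
    rcases Nat.lt_or_ge 1 p.length with h2 | h1
    · -- |p| ≥ 2 : first letter of p occurs before j, contradiction with minimality
      have hslt : s.length < j := by omega
      have hwlen : s.length < w.length := by omega
      have hfirst : w[s.length]'hwlen = θ c := by
        have e1 : (s ++ p)[s.length]'(by simp only [List.length_append]; omega)
            = p[s.length - s.length]'(by omega) := List.getElem_append_right le_rfl
        have e2 : (s ++ p)[s.length]'(by simp only [List.length_append]; omega)
            = (w.take (j + 1))[s.length]'(by simp [List.length_take]; omega) :=
          List.getElem_of_eq hs _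
        have e3 : (w.take (j + 1))[s.length]'(by simp [List.length_take]; omega)
            = w[s.length]'hwlen := List.getElem_take
        rw [← e3, ← e2, e1]
        simp [hr]
      have : w[s.length]'hwlen ∈ P := by
        rw [hPeq, Set.mem_setOf_eq, hPc, hfirst]
        right
        rfl
      exact hmin s.length hslt hwlen this
    · -- |p| = 1 : p = [c] and θ c = c, contradiction
      have hlen1 : p.length = 1 := by omega
      have : p = [c] := by
        rw [hclast]
        cases p with
        | nil => simp at hppos
        | cons x xs =>
          simp only [List.length_cons] at hlen1
          have : xs = [] := List.length_eq_zero_iff.mp (by omega)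
          subst this
          rfl
      rw [this] at hr
      have : θ c = c := by
        have := List.head_eq_of_cons_eq hr.symm
        exact this
      exact hθc this
  -- finiteness
  have hpalfin : (palSet Θ w).Finite :=
    Set.Finite.subset w.sublists.finite_toSet
      (fun p hp => List.mem_sublists.mpr hp.1.sublist)
  have hΓfin : Γ.Finite := Set.toFinite Γ
  -- counting
  have himdisj : Disjoint (f '' palSet Θ w) (g '' Γ) := by
    rw [Set.disjoint_left]
    rintro x ⟨p, hp, rfl⟩ ⟨P, hP, hgx⟩
    exact hdisj p hp P hP hgx.symm
  have hsub : f '' palSet Θ w ∪ g '' Γ ⊆ ↑(Finset.Iic n) := by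
    rintro x (⟨p, hp, rfl⟩ | ⟨P, hP, rfl⟩)
    · simpa using hf3 p hp
    · simpa using hgn P hP
  have hcount : (palSet Θ w).ncard + Γ.ncard ≤ n + 1 := by
    have e1 : (f '' palSet Θ w).ncard = (palSet Θ w).ncard := Set.ncard_image_of_injOn hfinj
    have e2 : (g '' Γ).ncard = Γ.ncard := Set.ncard_image_of_injOn hginj
    have e3 := Set.ncard_union_eq himdisj (hpalfin.image f) (hΓfin.image g)
    have e4 : (f '' palSet Θ w ∪ g '' Γ).ncard ≤ ((Finset.Iic n : Finset ℕ) : Set ℕ).ncard :=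
      Set.ncard_le_ncard hsub (Finset.Iic n).finite_toSet
    rw [Set.ncard_coe_finset, Nat.card_Iic] at e4
    omega
  rw [hγ]
  omega
end
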